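/- arXiv:2408.08957 — 13 statements merged into one kernel-verified Lean document; each statement's English description precedes it below -/
import Mathlib

section
/- Let q be an odd prime power, c ∈ F_q^*, a ∈ F_q^* a non-square, and β ∈ F_{q²} with β² = a. For any x, y ∈ F_q with (x,y) ≠ (0,0), defining f(X) = X(X^{q-1} - c)^{q+1}, we have f(x + yβ) = g(x,y)·(x + yβ), where g(x,y) = ((1-c)²x² - (1+c)²y²a)/(x² - y²a) ∈ F_q. -/
/-- odd characteristic multiplier formula
`f(x + yβ) = g(x,y)·(x + yβ)` with `g(x,y) = ((1-c)²x² - (1+c)²y²a)/(x² - y²a)`. -/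
theorem stmt_0 (q : ℕ) (F K : Type*) [Field F] [Field K] [Fintype F] [Fintype K]
    [Algebra F K] (hF : Fintype.card F = q) (hK : Fintype.card K = q ^ 2)
    (hodd : Odd q)
    (c a : F) (hc : c ≠ 0) (ha : a ≠ 0) (hna : ¬ IsSquare a)
    (β : K) (hβ : β ^ 2 = algebraMap F K a)
    (x y : F) (hxy : (x, y) ≠ (0, 0)) :
    (algebraMap F K x + algebraMap F K y * β) *
        ((algebraMap F K x + algebraMap F K y * β) ^ (q - 1) - algebraMap F K c) ^ (q + 1)
      = algebraMap F K (((1 - c) ^ 2 * x ^ 2 - (1 + c) ^ 2 * y ^ 2 * a) / (x ^ 2 - y ^ 2 * a)) *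
        (algebraMap F K x + algebraMap F K y * β) := by
  set A := algebraMap F K with hA
  have hAinj : Function.Injective A := (algebraMap F K).injective
  -- characteristic
  obtain ⟨p, hpF⟩ := CharP.exists F
  obtain ⟨n, hp, hq⟩ := FiniteField.card F p
  rw [hF] at hq
  haveI : Fact p.Prime := ⟨hp⟩
  haveI : CharP K p := charP_of_injective_algebraMap hAinj p
  obtain ⟨m, hm⟩ := hodd
  have hchar2 : ringChar F ≠ 2 := by
    intro h2
    have := FiniteField.even_card_of_char_two h2
    rw [hF] at this
    omega
  have hq1 : 1 ≤ q := by omega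
  -- constants are fixed by Frobenius
  have hAq : ∀ r : F, (A r) ^ q = A r := by
    intro r
    rw [← map_pow]
    congr 1
    rw [← hF]
    exact FiniteField.pow_card r
  -- a^((q-1)/2) = -1
  have hahalf : a ^ (q / 2) = -1 := by
    rw [← hF] at *
    rcases FiniteField.pow_dichotomy hchar2 ha with h | h
    · exact absurd ((FiniteField.isSquare_iff hchar2 ha).mpr h) hna
    · exact h
  -- β^q = -β
  have hbq : β ^ q = -β := by
    have hk2 : q / 2 = m := by omega
    calc β ^ q = β ^ (2 * m) * β := by rw [hm, pow_succ]
    _ = (β ^ 2) ^ m * β := by rw [pow_mul]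
    _ = A (a ^ (q/2)) * β := by rw [hβ, map_pow, hk2]
    _ = -β := by rw [hahalf, map_neg, map_one, neg_one_mul]
  set z : K := A x + A y * β with hz
  set zb : K := A x - A y * β with hzb
  -- norm
  have hNF : x ^ 2 - y ^ 2 * a ≠ 0 := by
    intro h
    rcases eq_or_ne y 0 with hy | hy
    · subst hy
      have hx : x = 0 := by
        have : x ^ 2 = 0 := by linear_combination h
        exact pow_eq_zero_iff (by norm_num) |>.mp this
      exact hxy (by simp [hx])
    · apply hna
      exact ⟨x / y, by field_simp; linear_combination -h⟩
  have hN : z * zb = A (x ^ 2 - y ^ 2 * a) := by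
    rw [hz, hzb]
    rw [map_sub, map_mul, map_pow, map_pow, ← hβ]
    ring
  have hNK : A (x ^ 2 - y ^ 2 * a) ≠ 0 := fun h => hNF (hAinj (by rwa [map_zero]))
  have hz0 : z ≠ 0 := fun h => hNK (by rw [← hN, h, zero_mul])
  have hzb0 : zb ≠ 0 := fun h => hNK (by rw [← hN, h, mul_zero])
  -- Frobenius
  have hzq : z ^ q = zb := by
    rw [hz, hzb, hq, add_pow_char_pow, ← hq, hAq, mul_pow, hAq, hbq]
    ring
  have hzbq : zb ^ q = z := by
    rw [hzb, hz, hq, sub_pow_char_pow, ← hq, hAq, mul_pow, hAq, hbq]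
    ring
  have hzpow : z ^ (q - 1) = zb / z := by
    field_simp
    rw [← pow_succ]
    rw [Nat.sub_add_cancel hq1, hzq]
  have hzbpow : zb ^ (q - 1) = z / zb := by
    field_simp
    rw [← pow_succ]
    rw [Nat.sub_add_cancel hq1, hzbq]
  -- main computation
  have hw : (z ^ (q - 1) - A c) ^ (q + 1)
      = A (((1 - c) ^ 2 * x ^ 2 - (1 + c) ^ 2 * y ^ 2 * a) / (x ^ 2 - y ^ 2 * a)) := by
    have hwq : (z ^ (q - 1) - A c) ^ q = zb ^ (q - 1) - A c := by
      rw [hq, sub_pow_char_pow, ← hq, ← pow_mul, mul_comm (q-1) q, pow_mul, hzq, hAq]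
    rw [pow_succ, hwq, hzpow, hzbpow, map_div₀]
    rw [div_sub' hzb0, div_sub' hz0, div_mul_div_comm, mul_comm zb z, hN]
    congr 1
    rw [hz, hzb]
    simp only [map_sub, map_mul, map_pow, map_add, map_one]
    linear_combination (-(1 + A c) ^ 2 * (A y) ^ 2) * hβ
  rw [hw]
  ring
end

section
/- Let q be an odd prime power, c ∈ F_q^*, and f(X) = X(X^{q-1} - c)^{q+1} viewed as a map F_{q²} → F_{q²}. If c² = 4, then the number of fixed points of f in F_{q²} is exactly q. -/
/-- if `c² = 4` then `f(X) = X(X^{q-1}-c)^{q+1}` has exactly `q` fixed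
points in `F_{q²}`. -/
theorem stmt_1 (q : ℕ) (F K : Type*) [Field F] [Field K] [Fintype F] [Fintype K]
    [Algebra F K] (hF : Fintype.card F = q) (hK : Fintype.card K = q ^ 2)
    (hodd : Odd q) (c : F) (hc : c ≠ 0) (hc2 : c ^ 2 = 4) :
    Set.ncard {α : K | α * ((α ^ (q - 1) - algebraMap F K c) ^ (q + 1)) = α} = q := by
  classical
  have hqmod : q % 2 = 1 := Nat.odd_iff.mp hodd
  have hq0 : q ≠ 0 := by omega
  have hq1 : 1 ≤ q := by omega
  have hq2le : 2 ≤ q := hF ▸ Fintype.one_lt_card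
  have hq3 : 3 ≤ q := by omega
  have hinj : Function.Injective (algebraMap F K) := (algebraMap F K).injective
  -- characteristic
  have hF2 : ringChar F ≠ 2 := by
    intro h
    have := FiniteField.even_card_of_char_two h
    rw [hF] at this; omega
  have h2F : (2 : F) ≠ 0 := Ring.two_ne_zero hF2
  set p := ringChar F with hpdef
  haveI hpF : CharP F p := ringChar.charP F
  haveI hpK : CharP K p := charP_of_injective_algebraMap hinj p
  obtain ⟨n, hpprime, hcard⟩ := FiniteField.card F p
  haveI : Fact p.Prime := ⟨hpprime⟩
  have hqpn : q = p ^ (n : ℕ) := by rw [← hF, hcard]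
  have hK2 : ringChar K ≠ 2 := by rw [ringChar.eq K p]; exact hpdef ▸ hF2
  have frobK : ∀ x y : K, (x - y) ^ q = x ^ q - y ^ q := by
    intro x y; rw [hqpn]; exact sub_pow_char_pow x y _
  have hmapq : ∀ a : F, (algebraMap F K a) ^ q = algebraMap F K a := by
    intro a; rw [← map_pow, ← hF, FiniteField.pow_card]
  set c' := algebraMap F K c with hc'def
  have hc'0 : c' ≠ 0 := by rw [hc'def]; exact fun h => hc ((map_eq_zero _).mp h)
  have hc'q : c' ^ q = c' := hmapq c
  -- e = c/2
  have h4F : (4 : F) ≠ 0 := by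
    have : (4 : F) = 2 * 2 := by norm_num
    rw [this]; exact mul_ne_zero h2F h2F
  set e : F := c / 2 with hedef
  have hce : c = 2 * e := by rw [hedef, mul_comm, div_mul_cancel₀ c h2F]
  have he2 : e ^ 2 = 1 := by
    rw [hedef, div_pow, hc2]
    rw [show ((2:F)^2) = 4 by norm_num]
    exact div_self h4F
  set e' := algebraMap F K e with he'def
  have hc'e : c' = 2 * e' := by rw [hc'def, hce, map_mul, map_ofNat]
  have he'2 : e' ^ 2 = 1 := by rw [he'def, ← map_pow, he2, map_one]
  have he'pm : e' = 1 ∨ e' = -1 := by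
    have h := mul_eq_zero.mp (show (e' - 1) * (e' + 1) = 0 by
      have : (e' - 1) * (e' + 1) = e' ^ 2 - 1 := by ring
      rw [this, he'2]; ring)
    rcases h with h | h
    · left; exact sub_eq_zero.mp h
    · right; exact eq_neg_of_add_eq_zero_left h
  have he'0 : e' ≠ 0 := by rcases he'pm with h | h <;> rw [h] <;> norm_num
  -- set equality
  have hsetS : {α : K | α * ((α ^ (q - 1) - algebraMap F K c) ^ (q + 1)) = α}
      = {α : K | α ^ q = e' * α} := by
    ext x
    simp only [Set.mem_setOf_eq, ← hc'def]
    by_cases hx : x = 0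
    · subst hx; simp [zero_pow hq0]
    · set t := x ^ (q - 1) with htdef
      have ht0 : t ≠ 0 := pow_ne_zero _ hx
      have htx : t * x = x ^ q := by
        rw [htdef, ← pow_succ]; congr 1; omega
      have ht1 : t ^ (q + 1) = 1 := by
        have h1 : x ^ (Fintype.card K - 1) = 1 := FiniteField.pow_card_sub_one_eq_one x hx
        rw [hK] at h1
        rw [htdef, ← pow_mul]
        have : (q - 1) * (q + 1) = q ^ 2 - 1 := by
          obtain ⟨m, rfl⟩ := Nat.exists_eq_add_of_le hq1
          have e1 : 1 + m - 1 = m := by omega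
          rw [e1]
          have e2 : (1 + m) ^ 2 = m * (1 + m + 1) + 1 := by ring
          omega
        rw [this]; exact h1
      have hts : t ^ q = t⁻¹ := by
        apply eq_inv_of_mul_eq_one_left
        rw [← pow_succ]; exact ht1
      have step2 : (t - c') ^ (q + 1) = (t⁻¹ - c') * (t - c') := by
        rw [pow_succ, frobK, hc'q, hts]
      have hfac : (t⁻¹ - c') * (t - c') * t = t - c' * (t - e') ^ 2 := by
        rw [hc'e]
        field_simp
        linear_combination (2 * e') * he'2
      constructor
      · intro h
        have h1 : (t - c') ^ (q + 1) = 1 :=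
          mul_left_cancel₀ hx (h.trans (mul_one x).symm)
        rw [step2] at h1
        have h3 := hfac
        rw [h1, one_mul] at h3
        have h2 : c' * (t - e') ^ 2 = 0 := by linear_combination h3
        have h5 : (t - e') ^ 2 = 0 := by
          rcases mul_eq_zero.mp h2 with h' | h'
          · exact absurd h' hc'0
          · exact h'
        have h4 : t = e' :=
          sub_eq_zero.mp ((pow_eq_zero_iff (by norm_num : (2:ℕ) ≠ 0)).mp h5)
        rw [← htx, h4]
      · intro h
        have h4 : t = e' := mul_right_cancel₀ hx (htx.trans h)
        have h1 : (t⁻¹ - c') * (t - c') = 1 := by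
          apply mul_right_cancel₀ ht0
          rw [hfac, h4]
          ring
        rw [step2, h1, mul_one]
  rw [hsetS]
  -- existence of β with β^q = e' β
  obtain ⟨β, hβ0, hβq⟩ : ∃ β : K, β ≠ 0 ∧ β ^ q = e' * β := by
    rcases he'pm with h1 | h1
    · exact ⟨1, one_ne_zero, by simp [h1]⟩
    · obtain ⟨u, hu⟩ := FiniteField.exists_nonsquare (F := F) hF2
      have hu0 : u ≠ 0 := by rintro rfl; exact hu IsSquare.zero
      have hupow : u ^ (q / 2) = -1 := by
        rcases FiniteField.pow_dichotomy hF2 hu0 with h | h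
        · exact absurd ((FiniteField.isSquare_iff hF2 hu0).mpr h) hu
        · rw [hF] at h; exact h
      have hu'0 : (algebraMap F K u) ≠ 0 := fun h => hu0 (hinj (by simpa using h))
      have hsq : IsSquare (algebraMap F K u) := by
        rw [FiniteField.isSquare_iff hK2 hu'0, hK]
        have hq2 : q ^ 2 / 2 = (q / 2) * (q + 1) := by
          obtain ⟨k, hk⟩ := hodd
          subst hk
          have : (2 * k + 1) ^ 2 = 4 * k ^ 2 + 4 * k + 1 := by ring
          have h2 : (2 * k + 1) / 2 = k := by omega
          rw [this, h2]; ring_nf; omega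
        rw [hq2, pow_mul, ← map_pow, hupow, map_neg, map_one]
        exact Even.neg_one_pow (Nat.even_iff.mpr (by omega))
      obtain ⟨β, hβ⟩ := hsq
      have hβ0 : β ≠ 0 := by rintro rfl; rw [mul_zero] at hβ; exact hu'0 hβ
      refine ⟨β, hβ0, ?_⟩
      have hq' : q = 2 * (q / 2) + 1 := by omega
      calc β ^ q = (β * β) ^ (q / 2) * β := by
            rw [← sq, ← pow_mul, ← pow_succ, ← hq']
        _ = (algebraMap F K u) ^ (q / 2) * β := by rw [← hβ]
        _ = e' * β := by rw [← map_pow, hupow, map_neg, map_one, h1]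
  -- counting
  set S := {α : K | α ^ q = e' * α} with hSdef
  have hub : S.ncard ≤ q := by
    set P : Polynomial K := Polynomial.X ^ q - Polynomial.C e' * Polynomial.X with hPdef
    have hdeg : P.natDegree = q := by
      rw [hPdef, Polynomial.natDegree_sub_eq_left_of_natDegree_lt, Polynomial.natDegree_X_pow]
      rw [Polynomial.natDegree_X_pow]
      calc (Polynomial.C e' * Polynomial.X : Polynomial K).natDegree = 1 :=
            Polynomial.natDegree_C_mul_X e' he'0
        _ < q := by omega
    have hP0 : P ≠ 0 := by
      intro h
      rw [h, Polynomial.natDegree_zero] at hdeg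
      omega
    have hsub : S ⊆ (P.roots.toFinset : Set K) := by
      intro x hx
      rw [Finset.mem_coe, Multiset.mem_toFinset, Polynomial.mem_roots hP0]
      simp only [hPdef, Polynomial.IsRoot, Polynomial.eval_sub, Polynomial.eval_pow,
        Polynomial.eval_mul, Polynomial.eval_C, Polynomial.eval_X]
      rw [hSdef] at hx
      simp only [Set.mem_setOf_eq] at hx
      rw [hx]; ring
    calc S.ncard ≤ (P.roots.toFinset : Set K).ncard := Set.ncard_le_ncard hsub (Set.toFinite _)
      _ = P.roots.toFinset.card := Set.ncard_coe_finset _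
      _ ≤ Multiset.card P.roots := Multiset.toFinset_card_le _
      _ ≤ P.natDegree := Polynomial.card_roots' P
      _ = q := hdeg
  have hlb : q ≤ S.ncard := by
    have hinj2 : Function.Injective (fun a : F => β * algebraMap F K a) := by
      intro a b h
      exact hinj (mul_left_cancel₀ hβ0 h)
    have himg : (fun a : F => β * algebraMap F K a) '' Set.univ ⊆ S := by
      rintro _ ⟨a, -, rfl⟩
      simp only [hSdef, Set.mem_setOf_eq]
      rw [mul_pow, hβq, hmapq a]
      ring
    calc q = Fintype.card F := hF.symm
      _ = (Set.univ : Set F).ncard := by rw [Set.ncard_univ, Nat.card_eq_fintype_card]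
      _ = ((fun a : F => β * algebraMap F K a) '' Set.univ).ncard :=
          (Set.ncard_image_of_injective _ hinj2).symm
      _ ≤ S.ncard := Set.ncard_le_ncard himg (Set.toFinite _)
  omega
end

section
/- Let q be an odd prime power, c ∈ F_q^* with c² ≠ 4, and f(X) = X(X^{q-1} - c)^{q+1} : F_{q²} → F_{q²}. If (c+2)/(c-2) is not a square in F_q, then f has exactly 2q - 1 fixed points in F_{q²}; if (c+2)/(c-2) is a nonzero square in F_q, then f has exactly 1 fixed point (namely 0). -/
private lemma nat_sq (q : ℕ) (hq : 1 ≤ q) : (q - 1) * (q + 1) = q ^ 2 - 1 := by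
  obtain ⟨t, rfl⟩ : ∃ t, q = t + 1 := ⟨q - 1, by omega⟩
  have h : (t + 1) ^ 2 = t * (t + 2) + 1 := by ring
  rw [h]
  simp

private lemma nat_div (t : ℕ) : (2 * t + 1) ^ 2 / 2 = (2 * t + 1 - 1) * ((2 * t + 1 + 1) / 2) := by
  have h1 : (2 * t + 1) ^ 2 = 4 * (t * (t + 1)) + 1 := by ring
  have h2 : (2 * t + 1 - 1) * ((2 * t + 1 + 1) / 2) = 2 * (t * (t + 1)) := by
    have h3 : (2 * t + 1 + 1) / 2 = t + 1 := by omega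
    have h4 : 2 * t + 1 - 1 = 2 * t := by omega
    rw [h3, h4]; ring
  rw [h1, h2]
  generalize t * (t + 1) = s
  omega

/-- fixed point counts for `c² ≠ 4` according to whether `(c+2)/(c-2)`
is a square in `F_q`. -/
theorem stmt_2 (q : ℕ) (F K : Type*) [Field F] [Field K] [Fintype F] [Fintype K]
    [Algebra F K] (hF : Fintype.card F = q) (hK : Fintype.card K = q ^ 2)
    (hodd : Odd q) (c : F) (hc : c ≠ 0) (hc2 : c ^ 2 ≠ 4) :
    (¬ IsSquare ((c + 2) / (c - 2)) →
      Set.ncard {α : K | α * ((α ^ (q - 1) - algebraMap F K c) ^ (q + 1)) = α} = 2 * q - 1) ∧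
    (IsSquare ((c + 2) / (c - 2)) →
      {α : K | α * ((α ^ (q - 1) - algebraMap F K c) ^ (q + 1)) = α} = {0}) := by
  classical
  have hq2 : 2 ≤ q := hF ▸ Fintype.one_lt_card
  have hqodd : q % 2 = 1 := Nat.odd_iff.mp hodd
  set φ : F →+* K := (algebraMap F K : F →+* K) with hφdef
  have hφ : (algebraMap F K : F → K) = φ := rfl
  have hinj : Function.Injective φ := φ.injective
  -- characteristic facts
  have hcharF : ringChar F ≠ 2 := by
    intro h
    have := FiniteField.even_card_of_char_two h
    rw [hF] at this; omega
  have hcharK : ringChar K ≠ 2 := by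
    intro h
    have h1 := FiniteField.even_card_of_char_two h
    rw [hK] at h1
    have h2 : q ^ 2 % 2 = 1 := Nat.odd_iff.mp hodd.pow
    omega
  have h2F : (2 : F) ≠ 0 := Ring.two_ne_zero hcharF
  have h2K : (2 : K) ≠ 0 := Ring.two_ne_zero hcharK
  -- Frobenius
  have hpK : CharP K (ringChar F) := charP_of_injective_algebraMap hinj (ringChar F)
  have hprime : (ringChar F).Prime := CharP.char_is_prime F (ringChar F)
  haveI : Fact (ringChar F).Prime := ⟨hprime⟩
  obtain ⟨n, -, hqpn⟩ := FiniteField.card F (ringChar F)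
  rw [hF] at hqpn
  have frob_sub : ∀ x y : K, (x - y) ^ q = x ^ q - y ^ q := by
    intro x y; rw [hqpn]; exact sub_pow_char_pow x y _
  have frob_add : ∀ x y : K, (x + y) ^ q = x ^ q + y ^ q := by
    intro x y; rw [hqpn]; exact add_pow_char_pow x y _ _
  have hφq : ∀ a : F, (φ a) ^ q = φ a := by
    intro a
    rw [← map_pow, ← hF, FiniteField.pow_card]
  set c' : K := φ c with hc'def
  have hc'0 : c' ≠ 0 := by
    simp only [hc'def, ne_eq, map_eq_zero]; exact hc
  have hc'2 : c' ^ 2 ≠ 4 := by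
    intro h
    apply hc2
    apply hinj
    rw [map_pow, map_ofNat]
    exact h
  have hcq : c' ^ q = c' := hφq c
  -- the square condition transfer
  have hcm2 : c - 2 ≠ 0 := by
    intro h
    apply hc2
    rw [sub_eq_zero] at h
    rw [h]; norm_num
  have hcp2 : c + 2 ≠ 0 := by
    intro h
    apply hc2
    have h2 : c = -2 := by linear_combination h
    rw [h2]; norm_num
  have hsq_iff : IsSquare ((c + 2) / (c - 2)) ↔ IsSquare (c ^ 2 - 4) := by
    constructor
    · rintro ⟨s, hs⟩
      refine ⟨s * (c - 2), ?_⟩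
      field_simp at hs
      linear_combination (c - 2) * hs
    · rintro ⟨s, hs⟩
      refine ⟨s / (c - 2), ?_⟩
      field_simp
      linear_combination hs
  -- the fixed point set
  set S : Set K := {α : K | α * ((α ^ (q - 1) - c') ^ (q + 1)) = α} with hSdef
  have hzero : (0 : K) ∈ S := by simp [hSdef]
  -- membership criterion for nonzero α
  have key : ∀ β : K, β ≠ 0 → β ^ (q + 1) = 1 →
      ((β - c') ^ (q + 1) = 1 ↔ β ^ 2 - c' * β + 1 = 0) := by
    intro β hβ hβ1
    have hbq : β ^ q = β⁻¹ := by
      apply eq_inv_of_mul_eq_one_left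
      rw [← pow_succ]
      exact hβ1
    rw [pow_succ, frob_sub, hcq, hbq]
    constructor
    · intro h
      field_simp at h
      have h3 : c' * (β ^ 2 - c' * β + 1) = 0 := by linear_combination -h
      rcases mul_eq_zero.mp h3 with h4 | h4
      · exact absurd h4 hc'0
      · exact h4
    · intro h
      field_simp
      linear_combination (-c') * h
  have hmem : ∀ α : K, α ≠ 0 →
      (α ∈ S ↔ (α ^ (q - 1)) ^ 2 - c' * α ^ (q - 1) + 1 = 0) := by
    intro α hα
    have hβ0 : α ^ (q - 1) ≠ 0 := pow_ne_zero _ hα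
    have hβ1 : (α ^ (q - 1)) ^ (q + 1) = 1 := by
      rw [← pow_mul, nat_sq q (by omega), ← hK]
      exact FiniteField.pow_card_sub_one_eq_one α hα
    have h1 : α ∈ S ↔ (α ^ (q - 1) - c') ^ (q + 1) = 1 := by
      simp only [hSdef, Set.mem_setOf_eq]
      constructor
      · intro h
        exact mul_left_cancel₀ hα (h.trans (mul_one α).symm)
      · intro h
        rw [h, mul_one]
    rw [h1, key _ hβ0 hβ1]
  -- square case: only fixed point is 0
  have hsingleton : IsSquare (c ^ 2 - 4) → S = {0} := by
    intro hs
    obtain ⟨d, hd⟩ := hs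
    apply Set.eq_singleton_iff_unique_mem.mpr
    refine ⟨hzero, ?_⟩
    intro α hα
    by_contra hα0
    have hP := (hmem α hα0).mp hα
    set β := α ^ (q - 1) with hβdef
    have hβ0 : β ≠ 0 := pow_ne_zero _ hα0
    have hβ1 : β ^ (q + 1) = 1 := by
      rw [hβdef, ← pow_mul, nat_sq q (by omega), ← hK]
      exact FiniteField.pow_card_sub_one_eq_one α hα0
    have e1 : φ ((c + d) / 2) + φ ((c - d) / 2) = c' := by
      rw [← map_add, hc'def]
      congr 1
      field_simp
      ring
    have e2 : φ ((c + d) / 2) * φ ((c - d) / 2) = 1 := by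
      rw [← map_mul, ← map_one φ]
      congr 1
      field_simp
      linear_combination hd
    have hr : β = φ ((c + d) / 2) ∨ β = φ ((c - d) / 2) := by
      have hfact : (β - φ ((c + d) / 2)) * (β - φ ((c - d) / 2)) = 0 := by
        linear_combination hP - β * e1 + e2
      rcases mul_eq_zero.mp hfact with h | h
      · exact Or.inl (sub_eq_zero.mp h)
      · exact Or.inr (sub_eq_zero.mp h)
    have hβq : β ^ q = β := by
      rcases hr with h | h <;> rw [h, hφq]
    have hβinv : β ^ q * β = 1 := by rw [← pow_succ]; exact hβ1
    have hββ : β * β = 1 := by rw [hβq] at hβinv; exact hβinv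
    have hcb : c' * β = 2 := by linear_combination -hP + hββ
    have h4 : c' ^ 2 = 4 := by
      linear_combination (c' * β + 2) * hcb + (-(c' ^ 2)) * hββ
    exact hc'2 h4
  -- the set of (q-1)-th roots of unity has q - 1 elements
  have hU : Set.ncard {x : K | x ^ (q - 1) = 1} = q - 1 := by
    apply le_antisymm
    · have hsub : {x : K | x ^ (q - 1) = 1} ⊆
          ↑((Polynomial.nthRoots (q - 1) (1 : K)).toFinset) := by
        intro x hx
        simp only [Finset.coe_sort_coe, Finset.mem_coe, Multiset.mem_toFinset]
        rw [Polynomial.mem_nthRoots (show 0 < q - 1 by omega)]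
        exact hx
      calc Set.ncard {x : K | x ^ (q - 1) = 1}
          ≤ (((Polynomial.nthRoots (q - 1) (1 : K)).toFinset : Finset K) : Set K).ncard :=
            Set.ncard_le_ncard hsub (Set.toFinite _)
        _ = (Polynomial.nthRoots (q - 1) (1 : K)).toFinset.card := Set.ncard_coe_finset _
        _ ≤ Multiset.card (Polynomial.nthRoots (q - 1) (1 : K)) := Multiset.toFinset_card_le _
        _ ≤ q - 1 := Polynomial.card_nthRoots _ _
    · have himg : (φ '' {a : F | a ≠ 0}) ⊆ {x : K | x ^ (q - 1) = 1} := by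
        rintro x ⟨a, ha, rfl⟩
        show (φ a) ^ (q - 1) = 1
        have h1 := FiniteField.pow_card_sub_one_eq_one a ha
        rw [hF] at h1
        rw [← map_pow, h1, map_one]
      have h2 : Set.ncard (φ '' {a : F | a ≠ 0}) = q - 1 := by
        rw [Set.ncard_image_of_injective _ hinj]
        have h3 : {a : F | a ≠ 0} = Set.univ \ {0} := by ext a; simp
        rw [h3, Set.ncard_diff (Set.subset_univ _), Set.ncard_univ, Set.ncard_singleton,
          Nat.card_eq_fintype_card, hF]
      calc q - 1 = Set.ncard (φ '' {a : F | a ≠ 0}) := h2.symm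
        _ ≤ _ := Set.ncard_le_ncard himg (Set.toFinite _)
  -- fibers of the (q-1)-power map over (q+1)-th roots of unity
  have hfiber : ∀ β : K, β ≠ 0 → β ^ (q + 1) = 1 →
      Set.ncard {α : K | α ^ (q - 1) = β} = q - 1 := by
    intro β hβ hβ1
    obtain ⟨g, hg⟩ := IsCyclic.exists_generator (α := Kˣ)
    have hord : orderOf g = q ^ 2 - 1 := by
      rw [orderOf_eq_card_of_forall_mem_zpowers hg, Nat.card_eq_fintype_card,
        Fintype.card_units, hK]
    obtain ⟨k, hk0⟩ := (mem_powers_iff_mem_zpowers).mpr (hg (Units.mk0 β hβ))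
    have hk : g ^ k = Units.mk0 β hβ := hk0
    have hpow1 : g ^ (k * (q + 1)) = 1 := by
      rw [pow_mul, hk]
      apply Units.ext
      rw [Units.val_pow_eq_pow_val, Units.val_mk0, Units.val_one]
      exact hβ1
    have hdvd : (q - 1) * (q + 1) ∣ k * (q + 1) := by
      rw [nat_sq q (by omega), ← hord]
      exact orderOf_dvd_of_pow_eq_one hpow1
    have hdk : (q - 1) ∣ k := (Nat.mul_dvd_mul_iff_right (show 0 < q + 1 by omega)).mp hdvd
    obtain ⟨m, hm⟩ := hdk
    have hα₀pow : (((g ^ m : Kˣ) : K)) ^ (q - 1) = β := by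
      have h1 : (g ^ m) ^ (q - 1) = Units.mk0 β hβ := by
        rw [← pow_mul, mul_comm m (q - 1), ← hm, hk]
      rw [← Units.val_pow_eq_pow_val, h1, Units.val_mk0]
    set α₀ : K := ((g ^ m : Kˣ) : K) with hα₀def
    have hα₀ne : α₀ ≠ 0 := Units.ne_zero _
    have himg : {α : K | α ^ (q - 1) = β} = (fun x => α₀ * x) '' {x : K | x ^ (q - 1) = 1} := by
      ext y
      simp only [Set.mem_setOf_eq, Set.mem_image]
      constructor
      · intro hy
        refine ⟨α₀⁻¹ * y, ?_, by field_simp⟩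
        rw [mul_pow, inv_pow, hα₀pow, hy]
        exact inv_mul_cancel₀ hβ
      · rintro ⟨x, hx, rfl⟩
        rw [mul_pow, hα₀pow, hx, mul_one]
    rw [himg, Set.ncard_image_of_injective _ (mul_right_injective₀ hα₀ne), hU]
  constructor
  · -- nonsquare case: 2q - 1 fixed points
    intro hns0
    have hns : ¬ IsSquare (c ^ 2 - 4) := fun h => hns0 (hsq_iff.mpr h)
    -- find a square root of c'^2 - 4 in K
    have h40 : c ^ 2 - 4 ≠ 0 := sub_ne_zero.mpr hc2
    have hK0 : φ (c ^ 2 - 4) ≠ 0 := by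
      simp only [ne_eq, map_eq_zero]; exact h40
    have hdiv : q ^ 2 / 2 = (q - 1) * ((q + 1) / 2) := by
      obtain ⟨t, ht⟩ := hodd
      rw [ht]
      exact nat_div t
    have hsqK : IsSquare (φ (c ^ 2 - 4)) := by
      rw [FiniteField.isSquare_iff hcharK hK0, hK, hdiv, pow_mul]
      have h1 : φ (c ^ 2 - 4) ^ (q - 1) = 1 := by
        have h2 := FiniteField.pow_card_sub_one_eq_one _ h40
        rw [hF] at h2
        rw [← map_pow, h2, map_one]
      rw [h1, one_pow]
    obtain ⟨e, he⟩ := hsqK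
    have he' : c' ^ 2 - 4 = e * e := by
      rw [← he, hc'def, map_sub, map_pow, map_ofNat]
    have he0 : e ≠ 0 := by
      intro h
      rw [h, mul_zero] at he'
      exact hc'2 (by linear_combination he')
    set β₁ : K := (c' + e) / 2 with hβ₁def
    set β₂ : K := (c' - e) / 2 with hβ₂def
    have hsum : β₁ + β₂ = c' := by
      rw [hβ₁def, hβ₂def]; field_simp; ring
    have hprodβ : β₁ * β₂ = 1 := by
      rw [hβ₁def, hβ₂def]; field_simp; linear_combination he'
    have hβne : β₁ ≠ β₂ := by
      intro h
      apply he0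
      have h2 : (2 : K) * e = 0 := by
        rw [hβ₁def, hβ₂def] at h
        field_simp at h
        linear_combination h
      rcases mul_eq_zero.mp h2 with h3 | h3
      · exact absurd h3 h2K
      · exact h3
    have hβ₁0 : β₁ ≠ 0 := left_ne_zero_of_mul_eq_one hprodβ
    have hβ₂0 : β₂ ≠ 0 := right_ne_zero_of_mul_eq_one hprodβ
    have hroots : ∀ β : K, β ^ 2 - c' * β + 1 = 0 ↔ (β = β₁ ∨ β = β₂) := by
      intro β
      constructor
      · intro h
        have hf : (β - β₁) * (β - β₂) = 0 := by
          linear_combination h - β * hsum + hprodβ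
        rcases mul_eq_zero.mp hf with h1 | h1
        · exact Or.inl (sub_eq_zero.mp h1)
        · exact Or.inr (sub_eq_zero.mp h1)
      · rintro (rfl | rfl)
        · linear_combination β₁ * hsum - hprodβ
        · linear_combination β₂ * hsum - hprodβ
    have hq2pow : (2 : K) ^ q = 2 := by
      have h1 := hφq 2
      rwa [map_ofNat] at h1
    have hfrob1 : β₁ ^ q = β₁ ∨ β₁ ^ q = β₂ := by
      apply (hroots _).mp
      have h0 : β₁ ^ 2 - c' * β₁ + 1 = 0 := (hroots β₁).mpr (Or.inl rfl)
      have h1 : (β₁ ^ 2 - c' * β₁ + 1) ^ q = 0 := by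
        rw [h0]; exact zero_pow (by omega)
      rw [frob_add, frob_sub, one_pow, mul_pow, hcq, ← pow_mul, mul_comm 2 q, pow_mul] at h1
      exact h1
    have hfrobfix : ¬ (β₁ ^ q = β₁) := by
      intro hfix
      apply hns
      have hee : e = 2 * β₁ - c' := by
        rw [hβ₁def]; field_simp; ring
      have heq : e ^ q = e := by
        rw [hee, frob_sub, mul_pow, hq2pow, hfix, hcq]
      have heq1 : e ^ (q - 1) = 1 := by
        have h1 : e ^ (q - 1) * e = e := by
          rw [← pow_succ]
          have h2 : q - 1 + 1 = q := by omega
          rw [h2, heq]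
        exact mul_right_cancel₀ he0 (h1.trans (one_mul e).symm)
      rw [FiniteField.isSquare_iff hcharF h40, hF]
      apply hinj
      rw [map_pow, map_one, he]
      have h3 : (e * e) ^ (q / 2) = e ^ (q - 1) := by
        rw [← sq, ← pow_mul]
        congr 1
        omega
      rw [h3, heq1]
    have hfrob12 : β₁ ^ q = β₂ := hfrob1.resolve_left hfrobfix
    have hβ₁Q : β₁ ^ (q + 1) = 1 := by
      rw [pow_succ, hfrob12, mul_comm]; exact hprodβ
    have hfrob21 : β₂ ^ q = β₁ := by
      have h1 : β₂ = c' - β₁ := by rw [← hsum]; ring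
      rw [h1, frob_sub, hcq, hfrob12, ← hsum]; ring
    have hβ₂Q : β₂ ^ (q + 1) = 1 := by
      rw [pow_succ, hfrob21, hprodβ]
    -- decompose S
    have hSdecomp : S = ({0} ∪ {α : K | α ^ (q - 1) = β₁}) ∪ {α : K | α ^ (q - 1) = β₂} := by
      ext α
      by_cases hα : α = 0
      · subst hα
        simp only [Set.mem_union, Set.mem_singleton_iff, Set.mem_setOf_eq]
        constructor
        · intro _; simp
        · intro _; exact hzero
      · simp only [Set.mem_union, Set.mem_singleton_iff, Set.mem_setOf_eq]
        constructor
        · intro hαS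
          rcases (hroots _).mp ((hmem α hα).mp hαS) with h | h
          · exact Or.inl (Or.inr h)
          · exact Or.inr h
        · rintro ((h | h) | h)
          · exact absurd h hα
          · exact (hmem α hα).mpr ((hroots _).mpr (Or.inl h))
          · exact (hmem α hα).mpr ((hroots _).mpr (Or.inr h))
    have hd1 : Disjoint ({0} : Set K) {α : K | α ^ (q - 1) = β₁} := by
      rw [Set.disjoint_left]
      intro α hα0 hα1
      rw [Set.mem_singleton_iff] at hα0
      subst hα0
      rw [Set.mem_setOf_eq, zero_pow (show q - 1 ≠ 0 by omega)] at hα1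
      exact hβ₁0 hα1.symm
    have hd2 : Disjoint ({0} : Set K) {α : K | α ^ (q - 1) = β₂} := by
      rw [Set.disjoint_left]
      intro α hα0 hα1
      rw [Set.mem_singleton_iff] at hα0
      subst hα0
      rw [Set.mem_setOf_eq, zero_pow (show q - 1 ≠ 0 by omega)] at hα1
      exact hβ₂0 hα1.symm
    have hd12 : Disjoint {α : K | α ^ (q - 1) = β₁} {α : K | α ^ (q - 1) = β₂} := by
      rw [Set.disjoint_left]
      intro α hα1 hα2
      rw [Set.mem_setOf_eq] at hα1 hα2
      exact hβne (hα1.symm.trans hα2)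
    rw [hSdecomp, Set.ncard_union_eq (Disjoint.union_left hd2 hd12) (Set.toFinite _)
      (Set.toFinite _), Set.ncard_union_eq hd1 (Set.toFinite _) (Set.toFinite _),
      Set.ncard_singleton, hfiber β₁ hβ₁0 hβ₁Q, hfiber β₂ hβ₂0 hβ₂Q]
    omega
  · -- square case
    intro hs0
    exact hsingleton (hsq_iff.mp hs0)
end

section
/- Let q be an odd prime power and f(X) = X(X^{q-1} - 1)^{q+1} : F_{q²} → F_{q²} (the case c = 1). Then f⁻¹(0) = F_q, i.e., an element α ∈ F_{q²} satisfies f(α) = 0 if and only if α ∈ F_q. Moreover, for every x ∈ F_q^*, f⁻¹(x) = ∅. -/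
open Polynomial

/-- An element of `K` lies in the image of `F` (with `card F = q`) iff it is fixed by
the `q`-power map. -/
lemma stmt4_aux_mem_range {q : ℕ} {F K : Type*} [Field F] [Field K] [Fintype F] [Fintype K]
    [Algebra F K] (hF : Fintype.card F = q) (α : K) :
    α ∈ Set.range (algebraMap F K) ↔ α ^ q = α := by
  classical
  have hq : 1 < q := hF ▸ Fintype.one_lt_card
  constructor
  · rintro ⟨x, rfl⟩
    rw [← map_pow]
    congr 1
    rw [← hF]
    exact FiniteField.pow_card x
  · intro h
    set T : Finset K := Finset.univ.image (algebraMap F K) with hTdef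
    have hTcard : T.card = q := by
      rw [hTdef, Finset.card_image_of_injective _ (algebraMap F K).injective,
        Finset.card_univ, hF]
    set P : Polynomial K := X ^ q - X with hPdef
    have hP0 : P ≠ 0 := FiniteField.X_pow_card_sub_X_ne_zero K hq
    have hroot : ∀ β : K, β ^ q = β → β ∈ P.roots.toFinset := by
      intro β hβ
      rw [Multiset.mem_toFinset, Polynomial.mem_roots hP0]
      simp [hPdef, Polynomial.IsRoot, hβ, sub_eq_zero]
    have hsub : T ⊆ P.roots.toFinset := by
      intro β hβ
      rw [hTdef, Finset.mem_image] at hβ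
      obtain ⟨x, -, rfl⟩ := hβ
      refine hroot _ ?_
      rw [← map_pow]
      congr 1
      rw [← hF]
      exact FiniteField.pow_card x
    have hrootscard : P.roots.toFinset.card ≤ q := by
      calc P.roots.toFinset.card ≤ Multiset.card P.roots := Multiset.toFinset_card_le _
        _ ≤ P.natDegree := P.card_roots' 
        _ = q := FiniteField.X_pow_card_sub_X_natDegree_eq K hq
    have hT_eq : T = P.roots.toFinset :=
      Finset.eq_of_subset_of_card_le hsub (by omega)
    have : α ∈ T := hT_eq ▸ hroot α h
    rw [hTdef, Finset.mem_image] at this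
    obtain ⟨x, -, rfl⟩ := this
    exact ⟨x, rfl⟩

/-- for odd `q` and `c = 1`, `f⁻¹(0) = F_q` and `f⁻¹(x) = ∅`
for every `x ∈ F_q^*`. -/
theorem stmt_4 (q : ℕ) (F K : Type*) [Field F] [Field K] [Fintype F] [Fintype K]
    [Algebra F K] (hF : Fintype.card F = q) (hK : Fintype.card K = q ^ 2)
    (hodd : Odd q) :
    (∀ α : K, α * ((α ^ (q - 1) - 1) ^ (q + 1)) = 0 ↔ α ∈ Set.range (algebraMap F K)) ∧
    (∀ x : F, x ≠ 0 → ∀ γ : K,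
      γ * ((γ ^ (q - 1) - 1) ^ (q + 1)) ≠ algebraMap F K x) := by
  have hq : 1 < q := hF ▸ Fintype.one_lt_card
  -- every element of K satisfies α ^ (q^2) = α
  have hKpow : ∀ α : K, α ^ q ^ 2 = α := by
    intro α
    have := FiniteField.pow_card α
    rwa [hK] at this
  have hq1 : q - 1 + 1 = q := by omega
  -- characterize f(α) = 0
  have hzero : ∀ α : K, α * ((α ^ (q - 1) - 1) ^ (q + 1)) = 0 ↔ α ^ q = α := by
    intro α
    rw [mul_eq_zero, pow_eq_zero_iff (by omega : q + 1 ≠ 0), sub_eq_zero]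
    constructor
    · rintro (rfl | h)
      · rw [zero_pow (by omega : q ≠ 0)]
      · calc α ^ q = α ^ (q - 1) * α := by rw [← pow_succ, hq1]
          _ = α := by rw [h, one_mul]
    · intro h
      rcases eq_or_ne α 0 with rfl | hα
      · exact Or.inl rfl
      · refine Or.inr ?_
        have : α ^ (q - 1) * α = 1 * α := by
          rw [← pow_succ, hq1, h, one_mul]
        exact mul_right_cancel₀ hα this
  constructor
  · intro α
    rw [hzero α, stmt4_aux_mem_range hF]
  · -- second part
    intro x hx γ hγeq
    -- char p setup to use Frobenius additivity
    obtain ⟨n, hp, hqn⟩ := FiniteField.card F (ringChar F)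
    haveI : Fact (Nat.Prime (ringChar F)) := ⟨hp⟩
    haveI : CharP K (ringChar F) :=
      charP_of_injective_algebraMap (algebraMap F K).injective _
    have hq_eq : q = ringChar F ^ (n : ℕ) := by rw [← hF, hqn]
    have hrhs0 : algebraMap F K x ≠ 0 := fun h =>
      hx ((algebraMap F K).injective (h.trans (map_zero _).symm))
    set u : K := γ ^ (q - 1) with hu
    have hγ0 : γ ≠ 0 := by
      rintro rfl
      exact hrhs0 (by rw [← hγeq]; ring)
    have hβ0 : u - 1 ≠ 0 := by
      intro h
      exact hrhs0 (by rw [← hγeq, h, zero_pow (by omega : q + 1 ≠ 0), mul_zero])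
    have hu0 : u ≠ 0 := pow_ne_zero _ hγ0
    have hγunit : γ ^ (q ^ 2 - 1) = 1 := by
      have := FiniteField.pow_card_sub_one_eq_one γ hγ0
      rwa [hK] at this
    have hmul : (q + 1) * (q - 1) = q ^ 2 - 1 := by
      have := Nat.sq_sub_sq q 1
      simpa using this.symm
    have huq1 : u ^ (q + 1) = 1 := by
      rw [hu, ← pow_mul, mul_comm (q - 1) (q + 1), hmul, hγunit]
    have huqinv : u ^ q = u⁻¹ :=
      eq_inv_of_mul_eq_one_left (by rw [← pow_succ, huq1])
    have hfrob : (u - 1) ^ q = u ^ q - 1 := by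
      rw [hq_eq]
      rw [sub_pow_char_pow]
      norm_num
    have heven : Even (q + 1) := hodd.add_one
    have h2 : (u - 1) ^ ((q + 1) * q) = (u - 1) ^ (q + 1) := by
      calc (u - 1) ^ ((q + 1) * q) = ((u - 1) ^ q) ^ (q + 1) := by
            rw [← pow_mul, mul_comm]
        _ = (u⁻¹ - 1) ^ (q + 1) := by rw [hfrob, huqinv]
        _ = (-(u⁻¹) * (u - 1)) ^ (q + 1) := by
            congr 1
            field_simp
            ring
        _ = (u⁻¹) ^ (q + 1) * (u - 1) ^ (q + 1) := by
            rw [mul_pow, heven.neg_pow]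
        _ = (u - 1) ^ (q + 1) := by
            rw [inv_pow, huq1, inv_one, one_mul]
    have hfix : (algebraMap F K x) ^ q = algebraMap F K x := by
      rw [← map_pow]
      congr 1
      rw [← hF]
      exact FiniteField.pow_card x
    have key : γ ^ q * (u - 1) ^ (q + 1) = γ * (u - 1) ^ (q + 1) := by
      have h3 : (γ * (u - 1) ^ (q + 1)) ^ q = γ * (u - 1) ^ (q + 1) := by
        rw [hγeq]; exact hfix
      calc γ ^ q * (u - 1) ^ (q + 1) = (γ * (u - 1) ^ (q + 1)) ^ q := by
            rw [mul_pow, ← pow_mul, h2]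
        _ = γ * (u - 1) ^ (q + 1) := h3
    have hγq : γ ^ q = γ := mul_right_cancel₀ (pow_ne_zero _ hβ0) key
    apply hβ0
    rw [sub_eq_zero, hu]
    have : γ ^ (q - 1) * γ = 1 * γ := by
      rw [← pow_succ, hq1, hγq, one_mul]
    exact mul_right_cancel₀ hγ0 this
end

section
/- Let q be an odd prime power, c ∈ F_q^*, a ∈ F_q^* a non-square, β ∈ F_{q²} with β² = a. For u, v ∈ F_q not both zero, let L = {λ(u + vβ) : λ ∈ F_q} be the line through the origin, and let g(u,v) = ((1-c)²u² - (1+c)²v²a)/(u² - v²a). If g(u,v) ≠ 0 and d is the multiplicative order of g(u,v) in F_q^*, then under f(X) = X(X^{q-1} - c)^{q+1} the set L \ {0} is invariant and is partitioned into exactly (q-1)/d cycles of f, each of length d. -/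
/-- for a line `L` through the origin with nonzero multiplier
`g(u,v)` of multiplicative order `d`, the set `L \ {0}` is invariant under `f` and is
partitioned into `(q-1)/d` cycles of `f`, each of length `d`. -/
theorem stmt_5 (q : ℕ) (F K : Type*) [Field F] [Field K] [Fintype F] [Fintype K]
    [Algebra F K] (hF : Fintype.card F = q) (hK : Fintype.card K = q ^ 2)
    (hodd : Odd q)
    (c a : F) (hc : c ≠ 0) (ha : a ≠ 0) (hna : ¬ IsSquare a)
    (β : K) (hβ : β ^ 2 = algebraMap F K a)
    (u v : F) (huv : (u, v) ≠ (0, 0))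
    (f : K → K) (hf : f = fun X => X * ((X ^ (q - 1) - algebraMap F K c) ^ (q + 1)))
    (L : Set K) (hL : L = {α : K | ∃ l : F, α = algebraMap F K l *
      (algebraMap F K u + algebraMap F K v * β)})
    (g : F) (hg : g = ((1 - c) ^ 2 * u ^ 2 - (1 + c) ^ 2 * v ^ 2 * a) / (u ^ 2 - v ^ 2 * a))
    (hg0 : g ≠ 0) (d : ℕ) (hd : d = orderOf g) :
    (∀ α ∈ L \ {0}, f α ∈ L \ {0}) ∧
    (∀ α ∈ L \ {0}, f^[d] α = α ∧ ∀ n : ℕ, 0 < n → n < d → f^[n] α ≠ α) ∧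
    Set.ncard {O : Set K | ∃ α ∈ L \ {0}, O = Set.range (fun n : ℕ => f^[n] α)}
      = (q - 1) / d := by
  classical
  have hq1 : 1 < q := hF ▸ Fintype.one_lt_card
  set e := algebraMap F K with he
  have hinj : Function.Injective e := (algebraMap F K).injective
  -- characteristic facts
  haveI := ringChar.charP F
  obtain ⟨n, hp, hqpn⟩ := FiniteField.card F (ringChar F)
  rw [hF] at hqpn
  haveI : Fact (ringChar F).Prime := ⟨hp⟩
  haveI : CharP K (ringChar F) := charP_of_injective_algebraMap hinj _
  have hadd : ∀ x y : K, (x + y) ^ q = x ^ q + y ^ q := by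
    intro x y; rw [hqpn]; exact add_pow_char_pow x y _ _
  have hchar2 : ringChar F ≠ 2 := by
    intro h2
    rw [h2] at hqpn
    have hdvd : 2 ∣ q := hqpn ▸ dvd_pow_self 2 n.ne_zero
    rcases hodd with ⟨k, hk⟩; omega
  have hEuler : a ^ (q / 2) = -1 := by
    rcases FiniteField.pow_dichotomy hchar2 ha with h | h
    · rw [hF] at h
      exact absurd ((FiniteField.isSquare_iff hchar2 ha).mpr (by rw [hF]; exact h)) hna
    · rw [hF] at h; exact h
  have hβq : β ^ q = -β := by
    obtain ⟨k, hk⟩ := hodd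
    have hk2 : q / 2 = k := by omega
    have hq' : q = 2 * k + 1 := by omega
    have hsplit : β ^ q = (β ^ 2) ^ k * β := by rw [hq', pow_succ, pow_mul]
    rw [hsplit, hβ, ← map_pow, ← hk2, hEuler, map_neg, map_one, neg_one_mul]
  have hfrob : ∀ x : F, (e x) ^ q = e x := by
    intro x; rw [← map_pow, ← hF, FiniteField.pow_card]
  -- nonvanishing facts
  have hne : ∀ u' v' : F, (u', v') ≠ (0, 0) → e u' + e v' * β ≠ 0 := by
    intro u' v' hne0 h0
    by_cases hv : v' = 0
    · have hu : u' = 0 := by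
        apply hinj; rw [map_zero]
        rw [hv, map_zero, zero_mul, add_zero] at h0
        exact h0
      exact hne0 (by simp [hu, hv])
    · apply hna
      have hev : e v' ≠ 0 := fun h => hv (hinj (by rw [h, map_zero]))
      have hβe : β = e (-(u' / v')) := by
        rw [map_neg, map_div₀, ← neg_div, eq_div_iff hev]
        linear_combination h0
      refine ⟨-(u' / v'), ?_⟩
      have : e a = e ((-(u' / v')) * (-(u' / v'))) := by
        rw [← hβ, hβe, map_mul]; ring
      exact hinj this
  have hw : e u + e v * β ≠ 0 := hne u v huv
  set w : K := e u + e v * β with hwdef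
  have hw' : e u - e v * β ≠ 0 := by
    have h1 : (u, -v) ≠ ((0 : F), (0 : F)) := by
      intro hcon
      apply huv
      have h2 := congrArg Prod.fst hcon
      have h3 := congrArg Prod.snd hcon
      simp only [Prod.fst, Prod.snd] at h2 h3
      simp only [neg_eq_zero] at h3
      rw [h2, h3]
    have := hne u (-v) h1
    rwa [map_neg, neg_mul, ← sub_eq_add_neg] at this
  have hden : u ^ 2 - v ^ 2 * a ≠ 0 := by
    intro h0
    have hprod : w * (e u - e v * β) = e (u ^ 2 - v ^ 2 * a) := by
      have h1 : w * (e u - e v * β) = (e u) ^ 2 - (e v) ^ 2 * β ^ 2 := by rw [hwdef]; ring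
      rw [h1, hβ, ← map_pow, ← map_pow, ← map_mul, ← map_sub]
    rw [h0, map_zero] at hprod
    exact mul_ne_zero hw hw' hprod
  -- the key multiplier computation
  have key : ∀ l : F, l ≠ 0 → f (e l * w) = e g * (e l * w) := by
    intro l hl
    have hel : e l ≠ 0 := fun h => hl (hinj (by rw [h, map_zero]))
    have hα : e l * w ≠ 0 := mul_ne_zero hel hw
    have hαq : (e l * w) ^ q = e l * (e u - e v * β) := by
      calc (e l * w) ^ q = (e l) ^ q * ((e u) ^ q + ((e v) * β) ^ q) := by
            rw [mul_pow, hwdef, hadd]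
        _ = e l * (e u - e v * β) := by rw [mul_pow, hfrob, hfrob, hfrob, hβq]; ring
    set γ : K := (e l * w) ^ q - e c * (e l * w) with hγdef
    have hγ : γ = e (l * (1 - c) * u) + e (-(l * (1 + c) * v)) * β := by
      rw [hγdef, hαq, hwdef]
      simp only [map_mul, map_sub, map_neg, map_one, map_add]
      ring
    have hγq : γ ^ q = e (l * (1 - c) * u) - e (-(l * (1 + c) * v)) * β := by
      rw [hγ, hadd, mul_pow, hfrob, hfrob, hβq]; ring
    have hγ2 : γ ^ (q + 1) = e (l ^ 2 * ((1 - c) ^ 2 * u ^ 2 - (1 + c) ^ 2 * v ^ 2 * a)) := by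
      have h1 : γ ^ (q + 1) = (e (l * (1 - c) * u)) ^ 2
          - (e (-(l * (1 + c) * v))) ^ 2 * β ^ 2 := by
        rw [pow_succ, hγq, hγ]; ring
      rw [h1, hβ, ← map_pow, ← map_pow, ← map_mul, ← map_sub]
      congr 1; ring
    have hα2 : (e l * w) ^ (q + 1) = e (l ^ 2 * (u ^ 2 - v ^ 2 * a)) := by
      have h1 : (e l * w) ^ (q + 1) = (e l) ^ 2 * ((e u) ^ 2 - (e v) ^ 2 * β ^ 2) := by
        rw [pow_succ, hαq, hwdef]; ring
      rw [h1, hβ, ← map_pow, ← map_pow, ← map_pow, ← map_mul, ← map_sub, ← map_mul]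
    have hstep : (e l * w) ^ (q - 1) - e c = γ * (e l * w)⁻¹ := by
      have hmulα : ((e l * w) ^ (q - 1) - e c) * (e l * w) = γ := by
        have hpow : (e l * w) ^ (q - 1) * (e l * w) = (e l * w) ^ q := by
          rw [← pow_succ]; congr 1; omega
        rw [hγdef, sub_mul, hpow]
      exact (eq_mul_inv_iff_mul_eq₀ hα).mpr hmulα
    have hND : l ^ 2 * ((1 - c) ^ 2 * u ^ 2 - (1 + c) ^ 2 * v ^ 2 * a)
        * (l ^ 2 * (u ^ 2 - v ^ 2 * a))⁻¹ = g := by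
      rw [hg]
      field_simp
    rw [hf]
    simp only
    rw [hstep, mul_pow, inv_pow, hγ2, hα2, ← map_inv₀, ← map_mul, hND]
    ring
  -- representation and invariance lemmas
  have hmemL : ∀ l : F, l ≠ 0 → e l * w ∈ L \ {0} := by
    intro l hl
    constructor
    · rw [hL]; exact ⟨l, rfl⟩
    · simp only [Set.mem_singleton_iff]
      exact mul_ne_zero (fun h => hl (hinj (by rw [h, map_zero]))) hw
  have hrep : ∀ α ∈ L \ {0}, ∃ l : F, l ≠ 0 ∧ α = e l * w := by
    rintro α ⟨hαL, hα0⟩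
    rw [hL] at hαL
    obtain ⟨l, rfl⟩ := hαL
    refine ⟨l, ?_, rfl⟩
    intro h0
    exact hα0 (by simp [h0])
  have hfe : ∀ α ∈ L \ {0}, f α = e g * α := by
    intro α hα
    obtain ⟨l, hl, rfl⟩ := hrep α hα
    exact key l hl
  have hInv : ∀ α ∈ L \ {0}, f α ∈ L \ {0} := by
    intro α hα
    obtain ⟨l, hl, rfl⟩ := hrep α hα
    rw [key l hl, ← mul_assoc, ← map_mul]
    exact hmemL (g * l) (mul_ne_zero hg0 hl)
  have hiter : ∀ α ∈ L \ {0}, ∀ n : ℕ, f^[n] α ∈ L \ {0} ∧ f^[n] α = (e g) ^ n * α := by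
    intro α hα n
    induction n with
    | zero => simpa using hα
    | succ n ih =>
        rw [Function.iterate_succ_apply']
        refine ⟨hInv _ ih.1, ?_⟩
        rw [hfe _ ih.1, ih.2, pow_succ]; ring
  have hgd : g ^ d = 1 := hd ▸ pow_orderOf_eq_one g
  have hfin : IsOfFinOrder g := isOfFinOrder_iff_pow_eq_one.mpr
    ⟨q - 1, by omega, by rw [← hF]; exact FiniteField.pow_card_sub_one_eq_one g hg0⟩
  have hd0 : 0 < d := hd ▸ hfin.orderOf_pos
  have hegd : (e g) ^ d = 1 := by rw [← map_pow, hgd, map_one]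
  refine ⟨hInv, ?_, ?_⟩
  · intro α hα
    have hα0 : α ≠ 0 := hα.2
    constructor
    · rw [(hiter α hα d).2, hegd, one_mul]
    · intro m hm hmd hcon
      rw [(hiter α hα m).2] at hcon
      have h1 : (e g) ^ m = 1 := by
        exact mul_right_cancel₀ hα0 (by rw [hcon, one_mul])
      have h2 : g ^ m = 1 := hinj (by rw [map_pow, map_one]; exact h1)
      have h3 : d ≤ m := hd ▸ Nat.le_of_dvd hm (orderOf_dvd_of_pow_eq_one h2)
      omega
  · -- counting the cycles
    set gu : Fˣ := Units.mk0 g hg0 with hgu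
    set H := Subgroup.zpowers gu with hH
    have hcardH : Nat.card H = d := by
      rw [Nat.card_zpowers, hd]
      exact (orderOf_units (y := gu)).symm
    have hcardQ : Nat.card (Fˣ ⧸ H) = (q - 1) / d := by
      have h1 := Subgroup.card_eq_card_quotient_mul_card_subgroup H
      have h2 : Nat.card Fˣ = q - 1 := by
        rw [Nat.card_eq_fintype_card, Fintype.card_units, hF]
      rw [hcardH, h2] at h1
      exact (Nat.div_eq_of_eq_mul_left hd0 h1).symm
    -- orbit equality under multiplication by powers of g
    have horb : ∀ α ∈ L \ {0}, ∀ m : ℕ,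
        Set.range (fun n : ℕ => f^[n] ((e g) ^ m * α)) =
          Set.range (fun n : ℕ => f^[n] α) := by
      intro α hα m
      have hmem : (e g) ^ m * α ∈ L \ {0} := by
        obtain ⟨l, hl, rfl⟩ := hrep α hα
        rw [← mul_assoc, ← map_pow, ← map_mul]
        exact hmemL (g ^ m * l) (mul_ne_zero (pow_ne_zero m hg0) hl)
      ext x
      simp only [Set.mem_range]
      constructor
      · rintro ⟨k, rfl⟩
        refine ⟨k + m, ?_⟩
        rw [(hiter α hα _).2, (hiter _ hmem k).2, pow_add]; ring
      · rintro ⟨k, rfl⟩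
        refine ⟨k + m * (d - 1), ?_⟩
        rw [(hiter _ hmem _).2, (hiter α hα k).2, ← mul_assoc, ← pow_add]
        have harith : k + m * (d - 1) + m = k + d * m := by
          obtain ⟨d', rfl⟩ : ∃ d', d = d' + 1 := ⟨d - 1, by omega⟩
          simp only [Nat.add_sub_cancel]
          ring
        rw [harith, pow_add, pow_mul, hegd, one_pow, mul_one]
    -- the parametrization map
    set φ : Fˣ → Set K := fun l => Set.range (fun n : ℕ => f^[n] (e (l : F) * w)) with hφ
    have hwd : ∀ x y : Fˣ, (QuotientGroup.leftRel H).r x y → φ x = φ y := by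
      intro x y hxy
      have hxy' : x⁻¹ * y ∈ H := (QuotientGroup.leftRel_apply).mp hxy
      obtain ⟨m, hm⟩ := (mem_powers_iff_mem_zpowers).mpr hxy'
      have hm' : gu ^ m = x⁻¹ * y := hm
      have hy : y = x * gu ^ m := by rw [hm']; group
      have hyval : (y : F) = g ^ m * (x : F) := by
        rw [hy]; simp [hgu, mul_comm]
      have hxmem : e (x : F) * w ∈ L \ {0} := hmemL _ x.ne_zero
      rw [hφ]
      simp only
      rw [hyval, map_mul, map_pow, mul_assoc]
      exact (horb _ hxmem m).symm
    set Φ : Fˣ ⧸ H → Set K := Quotient.lift φ hwd with hΦ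
    have hΦmk : ∀ l : Fˣ, Φ (QuotientGroup.mk l) = φ l := fun l => rfl
    have hΦinj : Function.Injective Φ := by
      intro x y hxy
      obtain ⟨lx, rfl⟩ := QuotientGroup.mk_surjective x
      obtain ⟨ly, rfl⟩ := QuotientGroup.mk_surjective y
      rw [hΦmk, hΦmk] at hxy
      have hymem : e (ly : F) * w ∈ φ ly := ⟨0, rfl⟩
      rw [← hxy] at hymem
      obtain ⟨k, hk⟩ := hymem
      have hk' : f^[k] (e (lx : F) * w) = e (ly : F) * w := hk
      rw [(hiter _ (hmemL _ lx.ne_zero) k).2, ← mul_assoc, ← map_pow, ← map_mul] at hk'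
      have hFeq : g ^ k * (lx : F) = (ly : F) :=
        hinj (mul_right_cancel₀ hw hk')
      have hmem : lx⁻¹ * ly ∈ H := by
        refine Subgroup.mem_zpowers_iff.mpr ⟨(k : ℤ), ?_⟩
        apply Units.ext
        rw [zpow_natCast, Units.val_mul]
        have h1 : ((gu ^ k : Fˣ) : F) = g ^ k := by
          rw [Units.val_pow_eq_pow_val, hgu, Units.val_mk0]
        rw [h1, ← hFeq, Units.val_inv_eq_inv_val,
          mul_comm (g ^ k) ((lx : Fˣ) : F), ← mul_assoc,
          inv_mul_cancel₀ lx.ne_zero, one_mul]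
      exact (QuotientGroup.eq).mpr hmem
    have hrange : Set.range Φ = {O : Set K | ∃ α ∈ L \ {0},
        O = Set.range (fun n : ℕ => f^[n] α)} := by
      ext O
      constructor
      · rintro ⟨x, rfl⟩
        obtain ⟨l, rfl⟩ := QuotientGroup.mk_surjective x
        exact ⟨e (l : F) * w, hmemL _ l.ne_zero, (hΦmk l).symm ▸ rfl⟩
      · rintro ⟨α, hα, rfl⟩
        obtain ⟨l, hl, rfl⟩ := hrep α hα
        exact ⟨QuotientGroup.mk (Units.mk0 l hl), (hΦmk _)⟩
    rw [← hrange, ← Nat.card_coe_set_eq, Nat.card_range_of_injective hΦinj, hcardQ]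
end

section
/- Let q be a power of 2, a ∈ F_q with Tr_{F_q/F_2}(a) = 1, β ∈ F_{q²} with β² + β + a = 0, and c ∈ F_q^*. For x, y ∈ F_q with (x,y) ≠ (0,0), defining f(X) = X(X^{q-1} - c)^{q+1}, we have f(x + yβ) = g(x,y)·(x + yβ), where g(x,y) = c² + 1 + c·y²/(x² + xy + y²a) ∈ F_q. -/
/-- even characteristic multiplier formula
`f(x + yβ) = g(x,y)·(x + yβ)` with `g(x,y) = c² + 1 + c·y²/(x² + xy + y²a)`. -/
theorem stmt_7 (q n : ℕ) (hn : n ≠ 0) (hq : q = 2 ^ n)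
    (F K : Type*) [Field F] [Field K] [Fintype F] [Fintype K] [CharP F 2]
    [Algebra F K] (hF : Fintype.card F = q) (hK : Fintype.card K = q ^ 2)
    (Tr : F → ZMod 2)
    (hTr : Tr = (letI := ZMod.algebra F 2; (Algebra.trace (ZMod 2) F : F →ₗ[ZMod 2] ZMod 2)))
    (a : F) (ha : Tr a = 1)
    (β : K) (hβ : β ^ 2 + β + algebraMap F K a = 0)
    (c : F) (hc : c ≠ 0)
    (x y : F) (hxy : (x, y) ≠ (0, 0)) :
    (algebraMap F K x + algebraMap F K y * β) *
        ((algebraMap F K x + algebraMap F K y * β) ^ (q - 1) - algebraMap F K c) ^ (q + 1)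
      = algebraMap F K (c ^ 2 + 1 + c * y ^ 2 / (x ^ 2 + x * y + y ^ 2 * a)) *
        (algebraMap F K x + algebraMap F K y * β) := by
  classical
  haveI : Fact (Nat.Prime 2) := ⟨Nat.prime_two⟩
  haveI hK2 : CharP K 2 := charP_of_injective_algebraMap (algebraMap F K).injective 2
  have h2 : (2 : K) = 0 := by
    have := CharP.cast_eq_zero K 2; exact_mod_cast this
  have hq1 : 1 ≤ q := by rw [hq]; exact Nat.one_le_two_pow
  have hq1' : 1 < q := by rw [hq]; exact Nat.one_lt_two_pow_iff.mpr hn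
  have hqF : ∀ t : F, t ^ q = t := fun t => by rw [← hF]; exact FiniteField.pow_card t
  have hinj := (algebraMap F K).injective
  -- no root of X^2+X+a in F
  have hirr : ∀ b : F, b ^ 2 + b + a ≠ 0 := by
    intro b hb
    letI := ZMod.algebra F 2
    have hcomm : ∀ r : ZMod 2, (frobeniusEquiv F 2) (algebraMap (ZMod 2) F r) =
        algebraMap (ZMod 2) F r := by
      intro r
      have hr : r ^ 2 = r := ZMod.pow_card r
      rw [frobeniusEquiv_def, ← map_pow, hr]
    let e : F ≃ₐ[ZMod 2] F := AlgEquiv.ofRingEquiv hcomm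
    have hTr2 : Tr (b ^ 2) = Tr b := by
      have : Tr (e b) = Tr b := by
        rw [hTr]; exact Algebra.trace_eq_of_algEquiv e b
      simpa [e, AlgEquiv.ofRingEquiv, frobeniusEquiv_def, frobenius_def] using this
    have hadd : Tr (b ^ 2 + b + a) = Tr (b ^ 2) + Tr b + Tr a := by
      rw [hTr]; simp
    have h0 : Tr 0 = 0 := by rw [hTr]; simp
    rw [hb, h0, hTr2, ha] at hadd
    rw [CharTwo.add_self_eq_zero, zero_add] at hadd
    exact one_ne_zero hadd.symm
  have hβF : ∀ b : F, algebraMap F K b ≠ β := by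
    intro b hb
    apply hirr b
    apply hinj
    rw [map_add, map_add, map_pow, hb, map_zero]
    exact hβ
  -- fixed points of x ↦ x^q are exactly image of F
  have hfix : ∀ t : K, t ^ q = t → ∃ b : F, algebraMap F K b = t := by
    intro t ht
    set P : Polynomial K := Polynomial.X ^ q - Polynomial.X with hP
    have hPne : P ≠ 0 := FiniteField.X_pow_card_sub_X_ne_zero K hq1'
    have hroot : ∀ s : K, s ^ q = s → s ∈ P.roots := by
      intro s hs
      rw [Polynomial.mem_roots hPne]
      simp [hP, Polynomial.IsRoot, hs]
    set R : Finset K := P.roots.toFinset with hR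
    have hsub : (Finset.univ.image (algebraMap F K)) ⊆ R := by
      intro s hs
      simp only [Finset.mem_image] at hs
      obtain ⟨b, _, rfl⟩ := hs
      rw [hR, Multiset.mem_toFinset]
      exact hroot _ (by rw [← map_pow, hqF])
    have hcardim : (Finset.univ.image (algebraMap F K)).card = q := by
      rw [Finset.card_image_of_injective _ hinj, Finset.card_univ, hF]
    have hcardR : R.card ≤ q := by
      calc R.card ≤ Multiset.card P.roots := P.roots.toFinset_card_le
        _ ≤ P.natDegree := P.card_roots'
        _ = q := FiniteField.X_pow_card_sub_X_natDegree_eq K hq1'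
    have heq : Finset.univ.image (algebraMap F K) = R :=
      Finset.eq_of_subset_of_card_le hsub (by rw [hcardim]; exact hcardR)
    have htR : t ∈ R := by rw [hR, Multiset.mem_toFinset]; exact hroot t ht
    rw [← heq] at htR
    simp only [Finset.mem_image] at htR
    obtain ⟨b, _, hb⟩ := htR
    exact ⟨b, hb⟩
  -- frobenius power
  set φ : K →+* K := iterateFrobenius K 2 n with hφdef
  have hφ : ∀ w : K, φ w = w ^ q := fun w => by
    rw [hφdef, iterateFrobenius_def, hq]
  have hAq : ∀ t : F, (algebraMap F K t) ^ q = algebraMap F K t := fun t => by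
    rw [← map_pow, hqF]
  have hβ2 : β ^ 2 = β + algebraMap F K a := by
    have : β ^ 2 + β + algebraMap F K a + (β + algebraMap F K a) =
        β + algebraMap F K a := by rw [hβ]; ring
    linear_combination this - β * h2 - algebraMap F K a * h2
  -- β^q = β + 1
  have hβq : β ^ q = β + 1 := by
    have hs : (β ^ q + β) ^ 2 = β ^ q + β := by
      have h1 : (β ^ q) ^ 2 = β ^ q + algebraMap F K a := by
        have h1' := congrArg φ hβ2
        rwa [map_pow, map_add, hφ β, hφ ((algebraMap F K) a), hAq] at h1'
      linear_combination h1 + hβ2 + (β ^ q * β + algebraMap F K a) * h2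
    have : (β ^ q + β) * (β ^ q + β - 1) = 0 := by linear_combination hs
    rcases mul_eq_zero.mp this with h | h
    · exfalso
      have hfe : β ^ q = β := by linear_combination h - β * h2
      obtain ⟨b, hb⟩ := hfix β hfe
      exact hβF b hb
    · have : β ^ q + β = 1 := by linear_combination h
      linear_combination this - β * h2
  set X := algebraMap F K x with hX
  set Y := algebraMap F K y with hY
  set A := algebraMap F K a with hA
  set C := algebraMap F K c with hC
  set Z := X + Y * β with hZ
  have hZq : Z ^ q = Z + Y := by
    rw [← hφ Z, hZ, map_add, map_mul, hφ, hφ, hφ, hAq, hAq, hβq]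
    ring
  have hYy : Y = 0 ↔ y = 0 := by
    rw [hY]; exact ⟨fun h => hinj (by simpa using h), fun h => by rw [h, map_zero]⟩
  have hZne : Z ≠ 0 := by
    intro h0
    by_cases hy : y = 0
    · apply hxy
      have hx0 : x = 0 := by
        apply hinj; rw [map_zero]
        rw [hZ, hYy.mpr hy, zero_mul, add_zero] at h0
        exact h0
      rw [hx0, hy]
    · have hYne : Y ≠ 0 := fun h => hy (hYy.mp h)
      apply hβF (x / y)
      rw [map_div₀, ← hX, ← hY]
      rw [hZ] at h0
      field_simp
      linear_combination h0 - Y * β * h2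
  have hZYne : Z + Y ≠ 0 := by
    intro h0
    apply hZne
    have hZq0 : Z ^ q = 0 := by rw [hZq, h0]
    exact pow_eq_zero_iff (by omega) |>.mp hZq0
  have hNK : Z * (Z + Y) = algebraMap F K (x ^ 2 + x * y + y ^ 2 * a) := by
    simp only [map_add, map_mul, map_pow, ← hX, ← hY, ← hA]
    rw [hZ]
    linear_combination (Y ^ 2) * hβ2 + (X * Y * β + Y ^ 2 * β) * h2
  have hNne : x ^ 2 + x * y + y ^ 2 * a ≠ 0 := by
    intro h0
    rw [h0, map_zero] at hNK
    rcases mul_eq_zero.mp hNK with h | h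
    exacts [hZne h, hZYne h]
  have hNKne : algebraMap F K (x ^ 2 + x * y + y ^ 2 * a) ≠ 0 :=
    (map_ne_zero _).mpr hNne
  have hZq1 : Z ^ (q - 1) = (Z + Y) * Z⁻¹ := by
    rw [pow_sub₀ Z hZne hq1, pow_one, hZq]
  have hZYq : (Z + Y) ^ q = Z := by
    rw [← hφ, map_add, hφ, hφ, hZq, hY, hAq, ← hY]
    linear_combination Y * h2
  have hCq : C ^ q = C := by rw [hC, hAq]
  have hW : (Z ^ (q - 1) - C) ^ (q + 1) = ((Z + Y) ^ (q - 1) - C) * (Z ^ (q - 1) - C) := by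
    rw [pow_succ]
    congr 1
    rw [← hφ, map_sub, map_pow, hφ, hZq, hφ, hCq]
  have hZY1 : (Z + Y) ^ (q - 1) = Z * (Z + Y)⁻¹ := by
    rw [pow_sub₀ _ hZYne hq1, pow_one, hZYq]
  rw [hW, hZq1, hZY1]
  rw [map_add, map_add, map_div₀, map_pow, map_mul, map_pow, map_one, ← hNK, ← hC, ← hY]
  field_simp
  linear_combination (-(C * (Z ^ 2 + Z * Y + Y ^ 2))) * h2
end

section
/- Let q be a power of 2, c ∈ F_q^*, and f(X) = X(X^{q-1} - c)^{q+1} : F_{q²} → F_{q²}. If Tr_{F_q/F_2}(1/c) = 1, then f has exactly 2q - 1 fixed points in F_{q²}; if Tr_{F_q/F_2}(1/c) = 0, then 0 is the only fixed point of f. -/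
open Polynomial

lemma trace_ne_zero_aux (p : ℕ) [Fact p.Prime] (E : Type*) [Field E] [Fintype E] [CharP E p]
    [Algebra (ZMod p) E] : ∃ b : E, Algebra.trace (ZMod p) E b ≠ 0 := by
  have h : ringChar E = p := ringChar.eq E p
  subst h
  obtain ⟨b, hb⟩ := FiniteField.trace_to_zmod_nondegenerate E (a := 1) one_ne_zero
  exact ⟨b, by simpa using hb⟩

lemma trace_sq (E : Type*) [Field E] [Fintype E] [CharP E 2] [Algebra (ZMod 2) E] (x : E) :
    Algebra.trace (ZMod 2) E (x ^ 2) = Algebra.trace (ZMod 2) E x := by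
  have hr2 : ∀ r : ZMod 2, r ^ 2 = r := by decide
  let σ : E ≃ₐ[ZMod 2] E :=
    AlgEquiv.ofRingEquiv (f := frobeniusEquiv E 2) (fun r => by
      simp only [frobeniusEquiv_apply, frobenius_def, ← map_pow, hr2])
  have h := Algebra.trace_eq_of_algEquiv σ x
  have hσ : σ x = x ^ 2 := by
    simp [σ, AlgEquiv.ofRingEquiv, frobenius_def]
  rw [← hσ, h]

lemma as_lemma (E : Type*) [Field E] [Fintype E] [CharP E 2] [Algebra (ZMod 2) E] (a : E) :
    Algebra.trace (ZMod 2) E a = 0 ↔ ∃ w : E, w ^ 2 + w = a := by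
  have h2 : (2 : E) = 0 := CharTwo.two_eq_zero
  set T := Algebra.trace (ZMod 2) E with hT
  let φ : E →+ E :=
    { toFun := fun w => w ^ 2 + w
      map_zero' := by simp
      map_add' := by intro x y; ring_nf; linear_combination x * y * h2 }
  have hTφ : ∀ w : E, T (φ w) = 0 := by
    intro w
    have : T (φ w) = T (w ^ 2) + T w := map_add T (w ^ 2) w
    rw [this, trace_sq E w]
    exact CharTwo.add_self_eq_zero _
  let Ta : E →+ ZMod 2 := T.toAddMonoidHom
  have hsurj : Function.Surjective Ta := by
    obtain ⟨b, hb⟩ := trace_ne_zero_aux 2 E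
    have hb1 : Ta b = 1 := by
      have : ∀ x : ZMod 2, x ≠ 0 → x = 1 := by decide
      exact this _ hb
    intro y
    have hy : y = 0 ∨ y = 1 := by
      have : ∀ x : ZMod 2, x = 0 ∨ x = 1 := by decide
      exact this y
    rcases hy with rfl | rfl
    · exact ⟨0, map_zero _⟩
    · exact ⟨b, hb1⟩
  have hkerφ : (φ.ker : Set E) = {0, 1} := by
    ext w
    simp only [SetLike.mem_coe, AddMonoidHom.mem_ker, Set.mem_insert_iff, Set.mem_singleton_iff]
    constructor
    · intro hw
      have hw' : w ^ 2 + w = 0 := hw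
      have : w * (w + 1) = 0 := by
        linear_combination hw'
      rcases mul_eq_zero.mp this with h | h
      · exact Or.inl h
      · refine Or.inr ?_
        linear_combination h - h2
    · rintro (rfl | rfl)
      · show (0:E) ^ 2 + 0 = 0; ring
      · show (1:E) ^ 2 + 1 = 0; linear_combination h2
  have hcardkerφ : Nat.card φ.ker = 2 := by
    have : Nat.card φ.ker = (φ.ker : Set E).ncard := by
      rw [← Nat.card_coe_set_eq]; rfl
    rw [this, hkerφ, Set.ncard_pair (zero_ne_one)]
  have h1 : Nat.card E = Nat.card φ.range * 2 := by
    have := AddSubgroup.card_eq_card_quotient_mul_card_addSubgroup φ.ker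
    rw [Nat.card_congr (QuotientAddGroup.quotientKerEquivRange φ).toEquiv, hcardkerφ] at this
    exact this
  have hrangeTa : Ta.range = ⊤ := AddMonoidHom.range_eq_top.mpr hsurj
  have h2' : Nat.card E = 2 * Nat.card Ta.ker := by
    have := AddSubgroup.card_eq_card_quotient_mul_card_addSubgroup Ta.ker
    rw [Nat.card_congr (QuotientAddGroup.quotientKerEquivRange Ta).toEquiv, hrangeTa] at this
    have htop : Nat.card (⊤ : AddSubgroup (ZMod 2)) = 2 := by
      rw [Nat.card_congr AddSubgroup.topEquiv.toEquiv]
      simp [Nat.card_eq_fintype_card]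
    rw [htop] at this
    exact this
  have hsub : (φ.range : Set E) ⊆ (Ta.ker : Set E) := by
    rintro x ⟨w, rfl⟩
    exact hTφ w
  have heq : (φ.range : Set E) = (Ta.ker : Set E) := by
    refine Set.eq_of_subset_of_ncard_le hsub ?_ (Set.toFinite _)
    rw [← Nat.card_coe_set_eq, ← Nat.card_coe_set_eq]
    have e1 : Nat.card (Ta.ker : Set E) = Nat.card Ta.ker := rfl
    have e2 : Nat.card (φ.range : Set E) = Nat.card φ.range := rfl
    rw [e1, e2]
    omega
  constructor
  · intro ha
    have : a ∈ (Ta.ker : Set E) := ha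
    rw [← heq] at this
    obtain ⟨w, hw⟩ := this
    exact ⟨w, hw⟩
  · rintro ⟨w, hw⟩
    have : a ∈ (φ.range : Set E) := ⟨w, hw⟩
    rw [heq] at this
    exact this

lemma fixed_of_pow (q : ℕ) (hq : 2 ≤ q) (F K : Type*) [Field F] [Field K] [Fintype F]
    [Algebra F K] (hF : Fintype.card F = q) (u : K) (hu : u ^ q = u) :
    ∃ a : F, algebraMap F K a = u := by
  classical
  set p : K[X] := X ^ q - X with hp
  have hp0 : p ≠ 0 := FiniteField.X_pow_card_sub_X_ne_zero K hq
  have hdeg : p.natDegree = q := FiniteField.X_pow_card_sub_X_natDegree_eq K hq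
  set s : Finset K := Finset.univ.image (algebraMap F K) with hs
  have hscard : s.card = q := by
    rw [hs, Finset.card_image_of_injective _ (algebraMap F K).injective, Finset.card_univ, hF]
  have hroot : ∀ a : F, p.IsRoot (algebraMap F K a) := by
    intro a
    have ha : a ^ q = a := by rw [← hF]; exact FiniteField.pow_card a
    simp only [p, IsRoot, eval_sub, eval_pow, eval_X, ← map_pow, ha, sub_self]
  have hsub : s ⊆ p.roots.toFinset := by
    intro x hx
    obtain ⟨a, -, rfl⟩ := Finset.mem_image.mp hx
    rw [Multiset.mem_toFinset, mem_roots hp0]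
    exact hroot a
  have hle : p.roots.toFinset.card ≤ q := by
    calc p.roots.toFinset.card ≤ Multiset.card p.roots := Multiset.toFinset_card_le _
    _ ≤ p.natDegree := card_roots' p
    _ = q := hdeg
  have heq : s = p.roots.toFinset := Finset.eq_of_subset_of_card_le hsub (by omega)
  have humem : u ∈ p.roots.toFinset := by
    rw [Multiset.mem_toFinset, mem_roots hp0]
    simp only [p, IsRoot, eval_sub, eval_pow, eval_X, hu, sub_self]
  rw [← heq] at humem
  obtain ⟨a, -, ha⟩ := Finset.mem_image.mp humem
  exact ⟨a, ha⟩

lemma sq_sub_one (q : ℕ) (hq : 2 ≤ q) : (q - 1) * (q + 1) = q ^ 2 - 1 := by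
  obtain ⟨k, rfl⟩ : ∃ k, q = k + 2 := ⟨q - 2, by omega⟩
  have h1 : k + 2 - 1 = k + 1 := by omega
  rw [h1]
  have : (k + 1) * (k + 2 + 1) + 1 = (k + 2) ^ 2 := by ring
  omega

lemma exists_prim_root (q : ℕ) (hq : 2 ≤ q) (K : Type*) [Field K] [Fintype K]
    (hK : Fintype.card K = q ^ 2) : ∃ ζ : K, IsPrimitiveRoot ζ (q - 1) := by
  classical
  obtain ⟨g, hg⟩ := IsCyclic.exists_generator (α := Kˣ)
  have hog : orderOf g = q ^ 2 - 1 := by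
    rw [orderOf_eq_card_of_forall_mem_zpowers hg, Nat.card_eq_fintype_card, Fintype.card_units, hK]
  have horder : orderOf (g ^ (q + 1)) = q - 1 := by
    rw [orderOf_pow, hog]
    have hdvd : (q + 1) ∣ q ^ 2 - 1 := ⟨q - 1, by rw [mul_comm]; exact (sq_sub_one q hq).symm⟩
    rw [Nat.gcd_eq_right hdvd]
    rw [← sq_sub_one q hq, Nat.mul_div_cancel _ (by omega)]
  have := IsPrimitiveRoot.orderOf (g ^ (q + 1))
  rw [horder] at this
  exact ⟨((g ^ (q + 1) : Kˣ) : K), IsPrimitiveRoot.coe_units_iff.mpr this⟩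

lemma exists_pow_root (q : ℕ) (hq : 2 ≤ q) (K : Type*) [Field K] [Fintype K]
    (hK : Fintype.card K = q ^ 2) (u : K) (hu0 : u ≠ 0) (hu : u ^ (q + 1) = 1) :
    ∃ α : K, α ^ (q - 1) = u := by
  classical
  obtain ⟨g, hg⟩ := IsCyclic.exists_generator (α := Kˣ)
  have hog : orderOf g = q ^ 2 - 1 := by
    rw [orderOf_eq_card_of_forall_mem_zpowers hg, Nat.card_eq_fintype_card, Fintype.card_units, hK]
  set v : Kˣ := Units.mk0 u hu0 with hv
  obtain ⟨k, hk⟩ := mem_powers_iff_mem_zpowers.mpr (hg v)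
  dsimp only at hk
  have hv1 : v ^ (q + 1) = 1 := by
    ext
    push_cast
    exact hu
  have hdvd : q ^ 2 - 1 ∣ k * (q + 1) := by
    rw [← hog]
    apply orderOf_dvd_of_pow_eq_one
    rw [pow_mul, hk, hv1]
  rw [← sq_sub_one q hq] at hdvd
  have hdvd2 : (q - 1) ∣ k := by
    have := (Nat.mul_dvd_mul_iff_right (show 0 < q + 1 by omega)).mp hdvd
    exact this
  obtain ⟨t, rfl⟩ := hdvd2
  refine ⟨((g ^ t : Kˣ) : K), ?_⟩
  have : (g ^ t) ^ (q - 1) = v := by rw [← hk, ← pow_mul, mul_comm]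
  calc ((g ^ t : Kˣ) : K) ^ (q - 1) = (((g ^ t) ^ (q - 1) : Kˣ) : K) := by push_cast; ring
  _ = u := by rw [this]; rfl

/-- even characteristic fixed point count: `2q - 1` fixed points if
`Tr(1/c) = 1`, and `0` is the only fixed point if `Tr(1/c) = 0`. -/
theorem stmt_8 (q n : ℕ) (hn : n ≠ 0) (hq : q = 2 ^ n)
    (F K : Type*) [Field F] [Field K] [Fintype F] [Fintype K] [CharP F 2]
    [Algebra F K] (hF : Fintype.card F = q) (hK : Fintype.card K = q ^ 2)
    (Tr : F → ZMod 2)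
    (hTr : Tr = (letI := ZMod.algebra F 2; (Algebra.trace (ZMod 2) F : F →ₗ[ZMod 2] ZMod 2)))
    (c : F) (hc : c ≠ 0) :
    (Tr (1 / c) = 1 →
      Set.ncard {α : K | α * ((α ^ (q - 1) - algebraMap F K c) ^ (q + 1)) = α} = 2 * q - 1) ∧
    (Tr (1 / c) = 0 →
      {α : K | α * ((α ^ (q - 1) - algebraMap F K c) ^ (q + 1)) = α} = {0}) := by
  classical
  subst hTr
  have hq2 : 2 ≤ q := by
    rw [hq]
    exact Nat.one_lt_two_pow_iff.mpr hn
  haveI hKchar : CharP K 2 := charP_of_injective_algebraMap (algebraMap F K).injective 2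
  letI : Algebra (ZMod 2) F := ZMod.algebra F 2
  letI : Algebra (ZMod 2) K := ZMod.algebra K 2
  haveI : IsScalarTower (ZMod 2) F K := IsScalarTower.of_algebraMap_eq' (RingHom.ext_zmod _ _)
  haveI : Module.Finite (ZMod 2) F := Module.Finite.of_finite
  haveI : Module.Finite F K := Module.Finite.of_finite
  have h2K : (2 : K) = 0 := CharTwo.two_eq_zero
  have h2F : (2 : F) = 0 := CharTwo.two_eq_zero
  set ι := algebraMap F K with hι_def
  set c' := ι c with hc'_def
  have hc' : c' ≠ 0 := fun h => hc (ι.injective (by rw [map_zero]; exact h))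
  -- Frobenius facts
  have hfrq : ∀ x y : K, (x + y) ^ q = x ^ q + y ^ q := by
    intro x y; rw [hq]; exact add_pow_char_pow x y 2 n
  have hsubq : ∀ x y : K, (x - y) ^ q = x ^ q - y ^ q := by
    intro x y; rw [hq]; exact sub_pow_char_pow x y n
  have hFpow : ∀ a : F, a ^ q = a := fun a => by rw [← hF]; exact FiniteField.pow_card a
  have hcq : c' ^ q = c' := by rw [hc'_def, ← map_pow, hFpow]
  have hKpow1 : ∀ α : K, α ≠ 0 → α ^ (q ^ 2 - 1) = 1 := fun α h => by
    rw [← hK]; exact FiniteField.pow_card_sub_one_eq_one α h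
  have hm : (q - 1) * (q + 1) = q ^ 2 - 1 := sq_sub_one q hq2
  -- finrank and trace vanishing on the base field image
  have hfinrank : Module.finrank F K = 2 := by
    have h := Module.card_eq_pow_finrank (K := F) (V := K)
    rw [hF, hK] at h
    exact (Nat.pow_right_injective hq2 h.symm)
  have htk0 : ∀ a : F, Algebra.trace (ZMod 2) K (ι a) = 0 := by
    intro a
    rw [← Algebra.trace_trace (S := F), hι_def, Algebra.trace_algebraMap, hfinrank]
    have h0 : (2 : ℕ) • a = 0 := by
      rw [two_smul]; exact CharTwo.add_self_eq_zero a
    rw [h0, map_zero]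
  have htrinv : Algebra.trace (ZMod 2) F ((1/c) ^ 2) = Algebra.trace (ZMod 2) F (1/c) :=
    trace_sq F _
  -- quadratic root machinery
  have factor : ∀ r : K, r ^ 2 + c' * r + 1 = 0 →
      ∀ x : K, x ^ 2 + c' * x + 1 = (x - r) * (x - (r + c')) := by
    intro r hr x
    linear_combination hr + (r * x + c' * x - r ^ 2 - r * c') * h2K
  have root_iff : ∀ r : K, r ^ 2 + c' * r + 1 = 0 →
      ∀ x : K, (x ^ 2 + c' * x + 1 = 0 ↔ (x = r ∨ x = r + c')) := by
    intro r hr x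
    rw [factor r hr x, mul_eq_zero, sub_eq_zero, sub_eq_zero]
  -- the key membership equivalence for nonzero α
  have key : ∀ α : K, α ≠ 0 →
      ((α * ((α ^ (q - 1) - c') ^ (q + 1)) = α) ↔
        ((α ^ (q - 1)) ^ 2 + c' * (α ^ (q - 1)) + 1 = 0)) := by
    intro α hα
    set x := α ^ (q - 1) with hx
    have hx0 : x ≠ 0 := pow_ne_zero _ hα
    have hx1 : x ^ (q + 1) = 1 := by rw [hx, ← pow_mul, hm]; exact hKpow1 α hα
    have hxq : x ^ q = x⁻¹ := by
      apply eq_inv_of_mul_eq_one_left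
      rw [← pow_succ]
      exact hx1
    have hinv : x * x⁻¹ = 1 := mul_inv_cancel₀ hx0
    have hstep : (x - c') ^ (q + 1) = (x⁻¹ - c') * (x - c') := by
      rw [pow_succ, hsubq, hcq, hxq, mul_comm]
    rw [hstep, mul_right_eq_self₀]
    constructor
    · rintro (h | h)
      · have hcancel : c' * (x ^ 2 + c' * x + 1) = 0 := by
          linear_combination (-x) * h + (x - c') * hinv + (c' ^ 2 * x) * h2K
        rcases mul_eq_zero.mp hcancel with h' | h'
        · exact absurd h' hc'
        · exact h'
      · exact absurd h hα
    · intro h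
      left
      linear_combination (-c' * x⁻¹) * h + (c' * x + c' ^ 2 + 1) * hinv + c' ^ 2 * h2K
  -- no root of the quadratic in F iff trace is 1 direction helpers
  constructor
  · -- Tr (1/c) = 1 case
    intro hTr1
    have hnotF : ¬ ∃ v : F, v ^ 2 + c * v + 1 = 0 := by
      rintro ⟨v, hv⟩
      have hinvc : c * c⁻¹ = 1 := mul_inv_cancel₀ hc
      have hw0 : (v * c⁻¹) ^ 2 + v * c⁻¹ = (1/c) ^ 2 := by
        linear_combination c⁻¹ ^ 2 * hv - (v * c⁻¹) * hinvc - c⁻¹ ^ 2 * h2F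
      have := (as_lemma F ((1/c) ^ 2)).mpr ⟨v * c⁻¹, hw0⟩
      rw [htrinv, hTr1] at this
      exact one_ne_zero this
    -- construct a root u in K
    obtain ⟨w, hw⟩ := (as_lemma K (ι ((1/c) ^ 2))).mp (htk0 _)
    have hwc : ι ((1/c) ^ 2) = 1 / c' ^ 2 := by
      rw [div_pow, one_pow, map_div₀, map_one, map_pow]
    obtain ⟨u, hu⟩ : ∃ u : K, u ^ 2 + c' * u + 1 = 0 := by
      refine ⟨c' * w, ?_⟩
      rw [hwc] at hw
      have hw' : c' ^ 2 * (w ^ 2 + w) = 1 := by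
        rw [hw]; field_simp
      linear_combination hw' + h2K
    have hu0 : u ≠ 0 := by
      intro h
      rw [h] at hu
      simp at hu
    have hroot2 : (u + c') ^ 2 + c' * (u + c') + 1 = 0 :=
      (root_iff u hu (u + c')).mpr (Or.inr rfl)
    have huc0 : u + c' ≠ 0 := by
      intro h
      rw [h] at hroot2
      simp at hroot2
    -- u^q is a root
    have hexpand : (u ^ 2 + c' * u + 1) ^ q = (u ^ q) ^ 2 + c' * (u ^ q) + 1 := by
      rw [hfrq (u ^ 2 + c' * u) 1, hfrq (u ^ 2) (c' * u), one_pow, mul_pow, hcq,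
        ← pow_mul, mul_comm 2 q, pow_mul]
    have huq_root : (u ^ q) ^ 2 + c' * (u ^ q) + 1 = 0 := by
      rw [← hexpand, hu]
      exact zero_pow (by omega)
    have hcases := (root_iff u hu (u ^ q)).mp huq_root
    have huq : u ^ q = u + c' := by
      rcases hcases with h | h
      · exfalso
        obtain ⟨a, ha⟩ := fixed_of_pow q hq2 F K hF u h
        apply hnotF
        refine ⟨a, ?_⟩
        apply ι.injective
        rw [map_add, map_add, map_mul, map_pow, map_one, map_zero, ha]
        exact hu
      · exact h
    have hu1 : u ^ (q + 1) = 1 := by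
      rw [pow_succ, huq]
      linear_combination hu - h2K
    have hu1' : (u + c') ^ (q + 1) = 1 := by
      rw [pow_succ, hfrq u c', hcq, huq]
      linear_combination hu + (c' * u + c' ^ 2 - 1) * h2K
    -- count the roots
    obtain ⟨ζ, hζ⟩ := exists_prim_root q hq2 K hK
    obtain ⟨α₁, hα₁⟩ := exists_pow_root q hq2 K hK u hu0 hu1
    obtain ⟨α₂, hα₂⟩ := exists_pow_root q hq2 K hK (u + c') huc0 hu1'
    set t₁ := (nthRoots (q - 1) u).toFinset with ht₁
    set t₂ := (nthRoots (q - 1) (u + c')).toFinset with ht₂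
    have ht₁card : t₁.card = q - 1 := by
      rw [ht₁, Multiset.toFinset_card_of_nodup (hζ.nthRoots_nodup hu0),
        hζ.card_nthRoots u, if_pos ⟨α₁, hα₁⟩]
    have ht₂card : t₂.card = q - 1 := by
      rw [ht₂, Multiset.toFinset_card_of_nodup (hζ.nthRoots_nodup huc0),
        hζ.card_nthRoots (u + c'), if_pos ⟨α₂, hα₂⟩]
    have hq1pos : 0 < q - 1 := by omega
    have hset : {α : K | α * ((α ^ (q - 1) - c') ^ (q + 1)) = α}
        = ↑(insert (0 : K) (t₁ ∪ t₂)) := by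
      ext α
      simp only [Set.mem_setOf_eq, Finset.coe_insert, Set.mem_insert_iff, Finset.coe_union,
        Set.mem_union, Finset.mem_coe, ht₁, ht₂, Multiset.mem_toFinset, mem_nthRoots hq1pos]
      by_cases hα : α = 0
      · subst hα
        simp
      · rw [key α hα, root_iff u hu (α ^ (q - 1))]
        constructor
        · intro h; exact Or.inr h
        · rintro (h | h)
          · exact absurd h hα
          · exact h
    rw [hset, Set.ncard_coe_finset]
    have h0t : (0 : K) ∉ t₁ ∪ t₂ := by
      simp only [Finset.mem_union, ht₁, ht₂, Multiset.mem_toFinset, mem_nthRoots hq1pos]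
      rintro (h | h)
      · rw [zero_pow (by omega)] at h; exact hu0 h.symm
      · rw [zero_pow (by omega)] at h; exact huc0 h.symm
    have hdisj : Disjoint t₁ t₂ := by
      rw [Finset.disjoint_left]
      intro x hx1 hx2
      rw [ht₁, Multiset.mem_toFinset, mem_nthRoots hq1pos] at hx1
      rw [ht₂, Multiset.mem_toFinset, mem_nthRoots hq1pos] at hx2
      apply hc'
      exact (left_eq_add.mp (hx1.symm.trans hx2))
    rw [Finset.card_insert_of_notMem h0t, Finset.card_union_of_disjoint hdisj,
      ht₁card, ht₂card]
    omega
  · -- Tr (1/c) = 0 case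
    intro hTr0
    obtain ⟨w, hw⟩ := (as_lemma F ((1/c) ^ 2)).mp (by rw [htrinv]; exact hTr0)
    set v := c * w with hv_def
    have hv : v ^ 2 + c * v + 1 = 0 := by
      have hw' : c ^ 2 * (w ^ 2 + w) = 1 := by
        rw [hw]; field_simp
      linear_combination hw' + h2F
    have hrK : (ι v) ^ 2 + c' * (ι v) + 1 = 0 := by
      have h := congrArg ι hv
      rw [map_add, map_add, map_mul, map_pow, map_one, map_zero] at h
      exact h
    ext α
    simp only [Set.mem_setOf_eq, Set.mem_singleton_iff]
    constructor
    · intro hmem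
      by_contra hα
      set x := α ^ (q - 1) with hx
      have hx0 : x ≠ 0 := pow_ne_zero _ hα
      have hx1 : x ^ (q + 1) = 1 := by rw [hx, ← pow_mul, hm]; exact hKpow1 α hα
      have hquad : x ^ 2 + c' * x + 1 = 0 := (key α hα).mp hmem
      have hcases := (root_iff (ι v) hrK x).mp hquad
      -- in both cases x is in the image of F
      have hxF : ∃ a : F, ι a = x := by
        rcases hcases with h | h
        · exact ⟨v, h.symm⟩
        · exact ⟨v + c, by rw [map_add, ← hc'_def, h]⟩
      obtain ⟨a, ha⟩ := hxF
      have hxq : x ^ q = x := by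
        rw [← ha, ← map_pow, hFpow]
      have hxsq : x ^ 2 = 1 := by
        have : x ^ q * x = 1 := by rw [← pow_succ]; exact hx1
        rw [hxq] at this
        rw [sq]; exact this
      have hx1' : x = 1 := by
        have hfac : (x - 1) ^ 2 = 0 := by
          linear_combination hxsq + (1 - x) * h2K
        have := pow_eq_zero_iff (n := 2) (by omega) |>.mp hfac
        exact sub_eq_zero.mp this
      rw [hx1'] at hquad
      apply hc'
      linear_combination hquad - h2K
    · intro h
      subst h
      simp
end

section
/- Let q be a power of 2 and f(X) = X(X^{q-1} - 1)^{q+1} : F_{q²} → F_{q²} (the case c = 1). Then for α ∈ F_{q²}, f(α) = 0 if and only if α ∈ F_q. Moreover, for every x ∈ F_q^*, there is no γ ∈ F_{q²} with f(γ) = x. -/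
/-- for `q` even and `c = 1`, `f(α) = 0` iff `α ∈ F_q`, and no element of
`F_q^*` has a preimage under `f`. -/
theorem stmt_10 (q n : ℕ) (hn : n ≠ 0) (hq : q = 2 ^ n)
    (F K : Type*) [Field F] [Field K] [Fintype F] [Fintype K] [CharP F 2]
    [Algebra F K] (hF : Fintype.card F = q) (hK : Fintype.card K = q ^ 2) :
    (∀ α : K, α * ((α ^ (q - 1) - 1) ^ (q + 1)) = 0 ↔ α ∈ Set.range (algebraMap F K)) ∧
    (∀ x : F, x ≠ 0 → ∀ γ : K,
      γ * ((γ ^ (q - 1) - 1) ^ (q + 1)) ≠ algebraMap F K x) := by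
  classical
  have hq2 : 2 ≤ q := by
    subst hq
    calc 2 = 2 ^ 1 := (pow_one 2).symm
    _ ≤ 2 ^ n := Nat.pow_le_pow_right (by norm_num) (Nat.one_le_iff_ne_zero.mpr hn)
  haveI : CharP K 2 := charP_of_injective_algebraMap (algebraMap F K).injective 2
  haveI : Fact (Nat.Prime 2) := ⟨Nat.prime_two⟩
  have hinj := (algebraMap F K).injective
  have hxq : ∀ x : F, x ^ q = x := fun x => by rw [← hF]; exact FiniteField.pow_card x
  have hsub : (q - 1) * (q + 1) = q ^ 2 - 1 := by
    obtain ⟨k, rfl⟩ : ∃ k, q = k + 2 := ⟨q - 2, by omega⟩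
    rw [show k + 2 - 1 = k + 1 from by omega]
    have h1 : (k + 1) * (k + 2 + 1) = k * k + 4 * k + 3 := by ring
    have h2 : (k + 2) ^ 2 = k * k + 4 * k + 4 := by ring
    omega
  -- fixed points of Frobenius = range of algebraMap
  have hrange : ∀ a : K, a ^ q = a ↔ a ∈ Set.range (algebraMap F K) := by
    intro a
    constructor
    · intro ha
      set p : Polynomial K := Polynomial.X ^ q - Polynomial.X with hp
      have hdeg : p.natDegree = q := by
        rw [hp, Polynomial.natDegree_sub_eq_left_of_natDegree_lt
          (by simp only [Polynomial.natDegree_X, Polynomial.natDegree_X_pow]; omega)]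
        exact Polynomial.natDegree_X_pow q
      have hpne : p ≠ 0 := by
        intro h0; rw [h0, Polynomial.natDegree_zero] at hdeg; omega
      have hTsub : (Finset.univ.image (algebraMap F K)) ⊆ p.roots.toFinset := by
        intro b hb
        obtain ⟨y, _, rfl⟩ := Finset.mem_image.mp hb
        rw [Multiset.mem_toFinset, Polynomial.mem_roots hpne]
        simp [hp, Polynomial.IsRoot, ← map_pow, hxq y]
      have hcard : (Finset.univ.image (algebraMap F K)).card = q := by
        rw [Finset.card_image_of_injective _ hinj, Finset.card_univ, hF]
      have hle : p.roots.toFinset.card ≤ q := by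
        calc p.roots.toFinset.card ≤ Multiset.card p.roots := p.roots.toFinset_card_le
          _ ≤ p.natDegree := Polynomial.card_roots' p
          _ = q := hdeg
      have heq : Finset.univ.image (algebraMap F K) = p.roots.toFinset :=
        Finset.eq_of_subset_of_card_le hTsub (by omega)
      have haroot : a ∈ p.roots.toFinset := by
        rw [Multiset.mem_toFinset, Polynomial.mem_roots hpne]
        simp [hp, Polynomial.IsRoot, ha]
      rw [← heq] at haroot
      obtain ⟨y, _, rfl⟩ := Finset.mem_image.mp haroot
      exact ⟨y, rfl⟩
    · rintro ⟨y, rfl⟩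
      rw [← map_pow, hxq y]
  -- f α = 0 ↔ α ^ q = α
  have hzero : ∀ α : K, α * ((α ^ (q - 1) - 1) ^ (q + 1)) = 0 ↔ α ^ q = α := by
    intro α
    rw [mul_eq_zero, pow_eq_zero_iff (by omega : q + 1 ≠ 0), sub_eq_zero]
    constructor
    · rintro (rfl | h)
      · exact zero_pow (by omega)
      · calc α ^ q = α ^ (q - 1) * α := by rw [← pow_succ]; congr 1; omega
          _ = α := by rw [h, one_mul]
    · intro h
      rcases eq_or_ne α 0 with rfl | hα
      · exact Or.inl rfl
      · refine Or.inr (mul_right_cancel₀ hα ?_)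
        rw [one_mul, ← pow_succ]
        convert h using 2
        omega
  constructor
  · intro α; rw [hzero α, hrange α]
  · intro x hx γ h
    have hc : algebraMap F K x ≠ 0 := fun h0 => hx (hinj (by rw [h0, map_zero]))
    set t : K := γ ^ (q - 1) with ht
    have hγ : γ ≠ 0 := by
      rintro rfl; rw [zero_mul] at h; exact hc h.symm
    have ht1 : t ≠ 1 := by
      intro h1
      rw [h1, sub_self, zero_pow (by omega : q + 1 ≠ 0), mul_zero] at h
      exact hc h.symm
    have htq1 : t ^ (q + 1) = 1 := by
      rw [ht, ← pow_mul, hsub, ← hK]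
      exact FiniteField.pow_card_sub_one_eq_one γ hγ
    -- key: (f γ)^q = t * f γ
    have hγq : γ ^ q = γ * t := by
      rw [ht, ← pow_succ']; congr 1; omega
    have hsubpow : ∀ a b : K, (a - b) ^ q = a ^ q - b ^ q := by
      intro a b; rw [hq]; exact sub_pow_char_pow a b n
    have hstep : (t ^ q - 1) ^ (q + 1) = (t - 1) ^ (q + 1) := by
      have h1 : (t ^ q - 1) * t = t - 1 := by
        have : (t ^ q - 1) * t = t ^ (q + 1) - t := by ring
        rw [this, htq1]
        rw [CharTwo.sub_eq_add, CharTwo.sub_eq_add, add_comm]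
      calc (t ^ q - 1) ^ (q + 1) = (t ^ q - 1) ^ (q + 1) * t ^ (q + 1) := by
            rw [htq1, mul_one]
        _ = ((t ^ q - 1) * t) ^ (q + 1) := by rw [mul_pow]
        _ = (t - 1) ^ (q + 1) := by rw [h1]
    have hkey : (γ * ((t - 1) ^ (q + 1))) ^ q = t * (γ * ((t - 1) ^ (q + 1))) := by
      calc (γ * ((t - 1) ^ (q + 1))) ^ q = γ ^ q * ((t - 1) ^ q) ^ (q + 1) := by
            rw [mul_pow, ← pow_mul, ← pow_mul, Nat.mul_comm]
        _ = γ * t * (t ^ q - 1) ^ (q + 1) := by rw [hγq, hsubpow, one_pow]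
        _ = γ * t * (t - 1) ^ (q + 1) := by rw [hstep]
        _ = t * (γ * ((t - 1) ^ (q + 1))) := by ring
    rw [h] at hkey
    rw [← map_pow, hxq x] at hkey
    exact ht1 (mul_right_cancel₀ hc (by rw [one_mul, ← hkey])).symm
end

section
/- Let q be a prime power and c ∈ F_q^*. The polynomial f(X) = X(X^{q-1} - c)^{q+1} is a permutation polynomial of F_{q²} if and only if c ≠ 1 and c ≠ -1. -/
/-- `f(X) = X(X^{q-1} - c)^{q+1}` is a permutation polynomial of `F_{q²}`
iff `c ≠ 1` and `c ≠ -1`. -/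
theorem stmt_12 (q : ℕ) (F K : Type*) [Field F] [Field K] [Fintype F] [Fintype K]
    [Algebra F K] (hF : Fintype.card F = q) (hK : Fintype.card K = q ^ 2)
    (c : F) (hc : c ≠ 0) :
    Function.Bijective (fun X : K => X * ((X ^ (q - 1) - algebraMap F K c) ^ (q + 1))) ↔
      (c ≠ 1 ∧ c ≠ -1) := by
  have hq2 : 2 ≤ q := hF ▸ Fintype.one_lt_card
  have hq1 : 1 ≤ q := by omega
  obtain ⟨n, hp, hcard⟩ := FiniteField.card F (ringChar F)
  set p := ringChar F with hpdef
  have hKp : CharP K p := charP_of_injective_algebraMap (algebraMap F K).injective p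
  have hq : q = p ^ (n : ℕ) := by rw [← hF, hcard]
  haveI : Fact p.Prime := ⟨hp⟩
  set a : K := algebraMap F K c with ha
  have hinj : Function.Injective (algebraMap F K) := (algebraMap F K).injective
  have ha0 : a ≠ 0 := by simpa [ha] using hc
  have hcq : c ^ q = c := by rw [← hF]; exact FiniteField.pow_card c
  have haq : a ^ q = a := by rw [ha, ← map_pow, hcq]
  have frob : ∀ x y : K, (x - y) ^ q = x ^ q - y ^ q := by
    intro x y; rw [hq]; exact sub_pow_char_pow x y (n:ℕ)
  have hmul : (q - 1) * (q + 1) = q ^ 2 - 1 := by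
    have h1 : 1 ≤ q ^ 2 := Nat.one_le_pow _ _ (by omega)
    zify [hq1, h1]; ring
  constructor
  · -- bijective → c ≠ 1 ∧ c ≠ -1
    intro hbij
    have key : ∀ b : K, b ≠ 0 → b ^ (q - 1) = a → False := by
      intro b hb hba
      have h1 : b * ((b ^ (q - 1) - a) ^ (q + 1)) =
          (0 : K) * (((0 : K) ^ (q - 1) - a) ^ (q + 1)) := by
        rw [hba, sub_self, zero_pow (by omega : q + 1 ≠ 0), mul_zero, zero_mul]
      exact hb (hbij.injective h1)
    constructor
    · rintro rfl
      exact key 1 one_ne_zero (by simp [ha])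
    · rintro rfl
      have ham1 : a = -1 := by simp [ha]
      by_cases hp2 : p = 2
      · haveI : CharP K 2 := hp2 ▸ hKp
        have h1 : a = 1 := by rw [ham1, CharTwo.neg_eq]
        exact key 1 one_ne_zero (by simp [h1])
      · -- p odd, hence q odd; use a generator of Kˣ
        have hpodd : Odd p := hp.odd_of_ne_two hp2
        have hqodd : Odd q := hq ▸ hpodd.pow
        obtain ⟨g, hg⟩ := IsCyclic.exists_generator (α := Kˣ)
        have horder : orderOf g = q ^ 2 - 1 := by
          rw [orderOf_eq_card_of_forall_mem_zpowers hg, Nat.card_units, Nat.card_eq_fintype_card, hK]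
        obtain ⟨k, hk⟩ := hqodd
        have hq2e : q ^ 2 = 4 * (k * k) + 4 * k + 1 := by rw [hk]; ring
        have hexp : (q - 1) * ((q + 1) / 2) = (q ^ 2 - 1) / 2 := by
          have e1 : (q + 1) / 2 = k + 1 := by omega
          have e2 : (q ^ 2 - 1) / 2 = 2 * (k * k) + 2 * k := by omega
          have e3 : q - 1 = 2 * k := by omega
          rw [e1, e2, e3]; ring
        set b : Kˣ := g ^ ((q + 1) / 2) with hbdef
        set h : Kˣ := g ^ ((q ^ 2 - 1) / 2) with hhdef
        have hb1 : b ^ (q - 1) = h := by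
          rw [hbdef, hhdef, ← pow_mul, mul_comm, hexp]
        have hh2 : h ^ 2 = 1 := by
          rw [hhdef, ← pow_mul]
          have : (q ^ 2 - 1) / 2 * 2 = q ^ 2 - 1 := by omega
          rw [this, ← horder, pow_orderOf_eq_one]
        have hh1 : h ≠ 1 := by
          intro h1
          have hd := orderOf_dvd_of_pow_eq_one (hhdef ▸ h1)
          rw [horder] at hd
          have h4 : 4 ≤ q ^ 2 := by
            calc (4:ℕ) = 2 ^ 2 := by norm_num
            _ ≤ q ^ 2 := Nat.pow_le_pow_left hq2 2
          have := Nat.le_of_dvd (by omega) hd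
          omega
        have hhK : (h : K) = -1 := by
          have : ((h : K)) ^ 2 = 1 := by
            rw [← Units.val_pow_eq_pow_val, hh2, Units.val_one]
          rcases sq_eq_one_iff.mp this with h1 | h1
          · exact absurd (Units.ext h1) hh1
          · exact h1
        refine key (b : K) (Units.ne_zero b) ?_
        rw [← Units.val_pow_eq_pow_val, hb1, hhK, ham1]
  · rintro ⟨hc1, hcm1⟩
    have ha1 : a ≠ 1 := fun h => hc1 (hinj (by rw [← ha, h, map_one]))
    have ham1 : a ≠ -1 := fun h => hcm1 (hinj (by rw [← ha, h, map_neg, map_one]))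
    rw [← Finite.injective_iff_bijective]
    have hne : ∀ x : K, x ≠ 0 → x ^ (q - 1) - a ≠ 0 := by
      intro x hx hEq
      have hu : x ^ (q - 1) = a := sub_eq_zero.mp hEq
      have hx1 : x ^ (q ^ 2 - 1) = 1 := by
        rw [← hK]; exact FiniteField.pow_card_sub_one_eq_one x hx
      have haq1 : a ^ (q + 1) = 1 := by rw [← hu, ← pow_mul, hmul, hx1]
      have ha2 : a ^ 2 = 1 := by
        have : a ^ (q + 1) = a ^ 2 := by rw [pow_succ, haq, sq]
        rw [← this, haq1]
      rcases sq_eq_one_iff.mp ha2 with h1 | h1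
      exacts [ha1 h1, ham1 h1]
    have hfx : ∀ x : K, x ≠ 0 →
        (x * ((x ^ (q - 1) - a) ^ (q + 1))) ^ (q - 1) = x ^ (q - 1) := by
      intro x hx
      set u := x ^ (q - 1) with hu
      have huq1 : u ^ (q + 1) = 1 := by
        rw [hu, ← pow_mul, hmul, ← hK]
        exact FiniteField.pow_card_sub_one_eq_one x hx
      have huq : u ^ q = u⁻¹ :=
        eq_inv_of_mul_eq_one_left (by rw [← pow_succ]; exact huq1)
      set s := (u - a) ^ (q + 1) with hs
      have hsne : s ≠ 0 := pow_ne_zero _ (hne x hx)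
      have h1 : s = (u⁻¹ - a) * (u - a) := by
        rw [hs, pow_succ, frob, haq, huq]
      have hsq : s ^ q = s := by
        have h2 : s ^ q = (u - a) * (u⁻¹ - a) := by
          rw [h1, mul_pow, frob, frob, haq, inv_pow, huq, inv_inv]
        rw [h2, h1, mul_comm]
      have hs1 : s ^ (q - 1) = 1 := by
        have h3 : s ^ (q - 1) * s = 1 * s := by
          rw [one_mul, ← pow_succ, Nat.sub_add_cancel hq1, hsq]
        exact mul_right_cancel₀ hsne h3
      rw [mul_pow, hs1, mul_one]
    intro x y hxy
    simp only at hxy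
    by_cases hx : x = 0
    · subst hx
      by_contra hy
      have hy0 : y ≠ 0 := fun h => hy h.symm
      have : y * ((y ^ (q - 1) - a) ^ (q + 1)) ≠ 0 :=
        mul_ne_zero hy0 (pow_ne_zero _ (hne y hy0))
      exact this (by rw [← hxy, zero_mul])
    · by_cases hy : y = 0
      · subst hy
        have : x * ((x ^ (q - 1) - a) ^ (q + 1)) ≠ 0 :=
          mul_ne_zero hx (pow_ne_zero _ (hne x hx))
        exact absurd (by rw [hxy, zero_mul]) this
      · have hu : x ^ (q - 1) = y ^ (q - 1) := by
          rw [← hfx x hx, ← hfx y hy, hxy]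
        have h5 : x * ((x ^ (q - 1) - a) ^ (q + 1)) =
            y * ((x ^ (q - 1) - a) ^ (q + 1)) := by
          rw [hxy, hu]
        exact mul_right_cancel₀ (pow_ne_zero _ (hne x hx)) h5
end

section
/- Let q be an odd prime power, c ∈ F_q^*, a ∈ F_q^* a non-square. Every α ∈ F_{q²}^* which is periodic under f(X) = X(X^{q-1} - c)^{q+1} has period dividing q - 1; that is, f^(q-1)(α) = α for every α ∈ F_{q²} not in the pre-image of 0. -/
/-- every periodic point of `f` has period dividing `q - 1`; indeed
`f^[q-1](α) = α` for every `α` with `f(α) ≠ 0`. -/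
theorem stmt_14 (q : ℕ) (F K : Type*) [Field F] [Field K] [Fintype F] [Fintype K]
    [Algebra F K] (hF : Fintype.card F = q) (hK : Fintype.card K = q ^ 2)
    (hodd : Odd q) (c : F) (hc : c ≠ 0)
    (f : K → K) (hf : f = fun X => X * ((X ^ (q - 1) - algebraMap F K c) ^ (q + 1))) :
    (∀ α : K, α ≠ 0 → (∃ m : ℕ, 0 < m ∧ f^[m] α = α) → f^[q - 1] α = α) ∧
    (∀ α : K, f α ≠ 0 → f^[q - 1] α = α) := by
  subst hf
  have hq1 : 1 < q := by rw [← hF]; exact Fintype.one_lt_card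
  have hq : q - 1 + 1 = q := by omega
  have key : ∀ α : K, (α ^ (q - 1) - algebraMap F K c) ^ (q + 1) ≠ 0 →
      (fun X => X * ((X ^ (q - 1) - algebraMap F K c) ^ (q + 1)))^[q - 1] α = α := by
    intro α hg
    set g := (α ^ (q - 1) - algebraMap F K c) ^ (q + 1) with hgdef
    set h := α ^ (q - 1) - algebraMap F K c with hhdef
    have hcard : ∀ x : K, x ^ (q ^ 2) = x := by
      intro x
      rw [← hK]; exact FiniteField.pow_card x
    have hgq : g ^ q = g := by
      calc g ^ q = h ^ ((q + 1) * q) := by rw [hgdef, ← pow_mul]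
        _ = h ^ (q ^ 2 + q) := by ring_nf
        _ = h ^ (q ^ 2) * h ^ q := by rw [pow_add]
        _ = h * h ^ q := by rw [hcard]
        _ = h ^ (q + 1) := (pow_succ' h q).symm
        _ = g := rfl
    have hg1 : g ^ (q - 1) = 1 := by
      have h2 : g * g ^ (q - 1) = g * 1 := by
        rw [mul_one, ← pow_succ', hq, hgq]
      exact mul_left_cancel₀ hg h2
    have hiter : ∀ n,
        (fun X => X * ((X ^ (q - 1) - algebraMap F K c) ^ (q + 1)))^[n] α = g ^ n * α := by
      intro n; induction n with
      | zero => simp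
      | succ n ih =>
        rw [Function.iterate_succ_apply', ih]
        show (g ^ n * α) * (((g ^ n * α) ^ (q - 1) - algebraMap F K c) ^ (q + 1))
            = g ^ (n + 1) * α
        have hp : (g ^ n * α) ^ (q - 1) = α ^ (q - 1) := by
          rw [mul_pow, ← pow_mul, mul_comm n (q - 1), pow_mul, hg1, one_pow, one_mul]
        rw [hp, ← hhdef, ← hgdef]; ring
    rw [hiter (q - 1), hg1, one_mul]
  constructor
  · rintro α hα ⟨m, hm, hper⟩
    by_cases hg : (α ^ (q - 1) - algebraMap F K c) ^ (q + 1) = 0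
    · exfalso
      have hz : (fun X : K => X * ((X ^ (q - 1) - algebraMap F K c) ^ (q + 1)))^[m] α = 0 := by
        obtain ⟨k, rfl⟩ := Nat.exists_eq_succ_of_ne_zero hm.ne'
        rw [Function.iterate_succ_apply]
        simp only [hg, mul_zero]
        exact Function.iterate_fixed (by simp) k
      rw [hper] at hz
      exact hα hz
    · exact key α hg
  · intro α hfα
    apply key
    intro hg
    exact hfα (by simp [hg])
end

section
/- Let q be an odd prime power, c ∈ F_q \ {0, 1, -1}. Then the number of connected components of the functional graph of f(X) = X(X^{q-1} - c)^{q+1} on F_{q²} equals 1 + Σ over lines L_{[u:v]} ∈ P¹ of (q-1)/ord(g(u,v)), where g(u,v) = ((1-c)²u² - (1+c)²v²a)/(u² - v²a) and ord denotes multiplicative order in F_q^*; equivalently, the functional graph is a disjoint union of the 1-cycle {0} and, for each of the q+1 lines through the origin, (q-1)/ord(g(u,v)) cycles of length ord(g(u,v)). -/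
set_option linter.unusedSectionVars false
set_option maxHeartbeats 1000000
open Subgroup

namespace Stmt15Aux

variable {F K : Type*} [Field F] [Field K] [Fintype F] [Fintype K] [Algebra F K]

/-- representative of a line through the origin -/
noncomputable def LRep (β : K) : Option F → K
  | none => 1
  | some l => algebraMap F K l + β

/-- points on lines -/
noncomputable def Psi (β : K) (t : Fˣ) (i : Option F) : K :=
  algebraMap F K (t : F) * LRep β i

/-- multipliers -/
noncomputable def delta (g : F → F → F) : Option F → F :=
  fun i => i.elim (g 1 0) fun l => g l 1

/-- parametrization of the orbits -/
noncomputable def Wmap (β : K) (f : K → K) (δu : Option F → Fˣ) :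
    Option ((i : Option F) × (Fˣ ⧸ Subgroup.zpowers (δu i))) → Set K
  | none => {(0 : K)}
  | some x => Set.range fun m : ℕ => f^[m] (Psi β (Quotient.out x.2) x.1)

end Stmt15Aux

section A
variable {F K : Type*} [Field F] [Field K] [Fintype F] [Fintype K] [Algebra F K]

theorem frobK (q : ℕ) (hF : Fintype.card F = q) (x y : K) :
    (x + y) ^ q = x ^ q + y ^ q := by
  have hp : CharP F (ringChar F) := ringChar.charP F
  have hprime : (ringChar F).Prime := CharP.char_is_prime F (ringChar F)
  haveI : Fact (ringChar F).Prime := ⟨hprime⟩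
  haveI : CharP K (ringChar F) :=
    charP_of_injective_ringHom (algebraMap F K).injective (ringChar F)
  obtain ⟨n, -, hcard⟩ := FiniteField.card F (ringChar F)
  rw [← hF, hcard]
  exact add_pow_char_pow x y (ringChar F) n

theorem betaq (q : ℕ) (hF : Fintype.card F = q) (hodd : Odd q)
    (a : F) (ha : a ≠ 0) (hna : ¬ IsSquare a)
    (β : K) (hβ : β ^ 2 = algebraMap F K a) : β ^ q = -β := by
  have hβ0 : β ≠ 0 := by
    intro h
    apply ha
    have : algebraMap F K a = 0 := by rw [← hβ, h]; ring
    exact (map_eq_zero _).mp this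
  have hsq : (β ^ q) ^ 2 = β ^ 2 := by
    rw [← pow_mul, mul_comm, pow_mul, hβ, ← map_pow, ← hF, FiniteField.pow_card]
  have hcases : β ^ q = β ∨ β ^ q = -β := by
    have : (β ^ q - β) * (β ^ q + β) = 0 := by linear_combination hsq
    rcases mul_eq_zero.mp this with h | h
    · exact Or.inl (sub_eq_zero.mp h)
    · exact Or.inr (eq_neg_of_add_eq_zero_left h)
  rcases hcases with h | h
  · exfalso
    apply hna
    obtain ⟨k, hq⟩ := id hodd
    have h1 : β ^ (2 * k) = algebraMap F K (a ^ k) := by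
      rw [pow_mul, hβ, map_pow]
    have h2 : β ^ (2 * k) = 1 := by
      apply mul_right_cancel₀ hβ0
      rw [one_mul]
      rw [hq, pow_succ] at h
      exact h
    have h3 : a ^ k = 1 := by
      apply (algebraMap F K).injective
      rw [← h1, h2, map_one]
    have hchar2 : ringChar F ≠ 2 := by
      intro h2c
      have hp : CharP F (ringChar F) := ringChar.charP F
      obtain ⟨n, hpr, hcard⟩ := FiniteField.card F (ringChar F)
      rw [h2c] at hcard
      have heven : Even q := by
        rw [← hF, hcard]
        exact Nat.even_pow.mpr ⟨even_two, by positivity⟩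
      exact (Nat.not_even_iff_odd.mpr hodd) heven
    rw [FiniteField.isSquare_iff hchar2 ha, hF]
    have hk2 : q / 2 = k := by omega
    rw [hk2, h3]
  · exact h

theorem coordzero (a : F) (hna : ¬ IsSquare a)
    (β : K) (hβ : β ^ 2 = algebraMap F K a)
    (u v : F) (h : algebraMap F K u + algebraMap F K v * β = 0) : u = 0 ∧ v = 0 := by
  by_cases hv : v = 0
  · subst hv
    simp only [map_zero, zero_mul, add_zero] at h
    exact ⟨(map_eq_zero _).mp h, rfl⟩
  · exfalso
    apply hna
    have hβeq : β = algebraMap F K (-u / v) := by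
      have hv' : algebraMap F K v ≠ 0 := fun hh => hv ((map_eq_zero _).mp hh)
      rw [map_div₀, map_neg, eq_div_iff hv']
      linear_combination h
    refine ⟨-u / v, ?_⟩
    have : algebraMap F K a = algebraMap F K (-u / v * (-u / v)) := by
      rw [← hβ, hβeq]; rw [map_mul]; ring
    exact (algebraMap F K).injective this

theorem coordeq (a : F) (hna : ¬ IsSquare a)
    (β : K) (hβ : β ^ 2 = algebraMap F K a)
    (u v u' v' : F)
    (h : algebraMap F K u + algebraMap F K v * β
       = algebraMap F K u' + algebraMap F K v' * β) : u = u' ∧ v = v' := by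
  have h0 : algebraMap F K (u - u') + algebraMap F K (v - v') * β = 0 := by
    simp only [map_sub]
    linear_combination h
  obtain ⟨h1, h2⟩ := coordzero a hna β hβ _ _ h0
  exact ⟨sub_eq_zero.mp h1, sub_eq_zero.mp h2⟩

theorem coordspan (q : ℕ) (hF : Fintype.card F = q) (hK : Fintype.card K = q ^ 2)
    (a : F) (hna : ¬ IsSquare a)
    (β : K) (hβ : β ^ 2 = algebraMap F K a)
    (x : K) : ∃ u v : F, x = algebraMap F K u + algebraMap F K v * β := by
  set Φ : F × F → K := fun p => algebraMap F K p.1 + algebraMap F K p.2 * β with hΦ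
  have hinj : Function.Injective Φ := by
    intro p1 p2 h
    obtain ⟨e1, e2⟩ := coordeq a hna β hβ _ _ _ _ h
    exact Prod.ext e1 e2
  have hbij : Function.Bijective Φ := by
    rw [Fintype.bijective_iff_injective_and_card]
    refine ⟨hinj, ?_⟩
    rw [Fintype.card_prod, hF, hK, sq]
  obtain ⟨⟨u, v⟩, huv⟩ := hbij.2 x
  exact ⟨u, v, huv.symm⟩

theorem denne (a : F) (hna : ¬ IsSquare a) (u v : F) (huv : u ≠ 0 ∨ v ≠ 0) :
    u ^ 2 - v ^ 2 * a ≠ 0 := by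
  intro h
  by_cases hv : v = 0
  · subst hv
    rcases huv with hu | hu
    · simp at h; exact hu h
    · exact hu rfl
  · apply hna
    refine ⟨u / v, ?_⟩
    have h2 : a = (u / v) ^ 2 := by
      field_simp
      linear_combination -h
    rw [h2, sq]

theorem normval (q : ℕ) (hF : Fintype.card F = q) (hodd : Odd q)
    (a : F) (ha : a ≠ 0) (hna : ¬ IsSquare a)
    (β : K) (hβ : β ^ 2 = algebraMap F K a)
    (u v : F) :
    (algebraMap F K u + algebraMap F K v * β) ^ (q + 1)
      = algebraMap F K (u ^ 2 - v ^ 2 * a) := by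
  have hfr : (algebraMap F K u + algebraMap F K v * β) ^ q
      = algebraMap F K u - algebraMap F K v * β := by
    rw [frobK q hF, mul_pow, ← map_pow, ← map_pow, ← hF, FiniteField.pow_card,
      FiniteField.pow_card, hF, betaq q hF hodd a ha hna β hβ]
    ring
  rw [pow_succ, hfr]
  rw [map_sub, map_mul, map_pow, map_pow, ← hβ]
  ring

/-- The multiplier map. -/
noncomputable def Dm (q : ℕ) (c : F) (x : K) : K :=
  (x ^ (q - 1) - algebraMap F K c) ^ (q + 1)

theorem Dval (q : ℕ) (hF : Fintype.card F = q) (hodd : Odd q)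
    (c a : F) (ha : a ≠ 0) (hna : ¬ IsSquare a)
    (β : K) (hβ : β ^ 2 = algebraMap F K a)
    (u v : F) (huv : u ≠ 0 ∨ v ≠ 0) :
    Dm q c (algebraMap F K u + algebraMap F K v * β)
      = algebraMap F K
        (((1 - c) ^ 2 * u ^ 2 - (1 + c) ^ 2 * v ^ 2 * a) / (u ^ 2 - v ^ 2 * a)) := by
  have hq1 : 1 ≤ q := hodd.pos
  set A := algebraMap F K with hA
  set x : K := A u + A v * β with hx
  have hx0 : x ≠ 0 := by
    intro h
    obtain ⟨h1, h2⟩ := coordzero a hna β hβ u v h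
    rcases huv with h' | h' <;> [exact h' h1; exact h' h2]
  have hxpow : x ^ (q - 1) = x ^ q * x⁻¹ := by
    rw [pow_sub₀ x hx0 hq1, pow_one]
  have hfr : x ^ q = A u - A v * β := by
    rw [hx, frobK q hF, mul_pow, ← map_pow, ← map_pow, ← hF, FiniteField.pow_card,
      FiniteField.pow_card, hF, betaq q hF hodd a ha hna β hβ]
    ring
  have hy : x ^ q - A c * x = A ((1 - c) * u) + A (-((1 + c) * v)) * β := by
    rw [hfr]
    simp only [hfr, hx, map_mul, map_neg, map_sub, map_add, map_one]
    ring
  have hkey : x ^ (q - 1) - A c = (x ^ q - A c * x) * x⁻¹ := by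
    rw [hxpow, sub_mul, mul_assoc]
    rw [mul_inv_cancel₀ hx0, mul_one]
  have hDm : Dm q c x = (x ^ q - A c * x) ^ (q + 1) * (x ^ (q + 1))⁻¹ := by
    rw [Dm, hkey, mul_pow, inv_pow]
  have hn1 : x ^ (q + 1) = A (u ^ 2 - v ^ 2 * a) := by
    rw [hx]; exact normval q hF hodd a ha hna β hβ u v
  rw [hDm, hy, normval q hF hodd a ha hna β hβ, hn1]
  rw [div_eq_mul_inv, map_mul, map_inv₀]
  rw [show ((1 - c) * u) ^ 2 - (-((1 + c) * v)) ^ 2 * a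
      = (1 - c) ^ 2 * u ^ 2 - (1 + c) ^ 2 * v ^ 2 * a from by ring]

end A

open Stmt15Aux

/-- for odd `q` and `c ∉ {0,1,-1}`, the functional graph of `f` on `F_{q²}`
consists only of cycles, and the number of connected components (orbits of `f`) equals
`1 + Σ_{L ∈ P¹} (q-1)/ord(g(L))`, where the `q+1` lines of `P¹` are `L_{[1:0]}` and
`L_{[λ:1]}`, `λ ∈ F_q`, with multipliers `g(1,0) = (1-c)²` and
`g(λ,1) = ((1-c)²λ² - (1+c)²a)/(λ² - a)`. -/
theorem stmt_15 (q : ℕ) (F K : Type*) [Field F] [Field K] [Fintype F] [Fintype K]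
    [Algebra F K] (hF : Fintype.card F = q) (hK : Fintype.card K = q ^ 2)
    (hodd : Odd q)
    (c a : F) (hc : c ≠ 0) (hc1 : c ≠ 1) (hcm1 : c ≠ -1)
    (ha : a ≠ 0) (hna : ¬ IsSquare a)
    (β : K) (hβ : β ^ 2 = algebraMap F K a)
    (f : K → K) (hf : f = fun X => X * ((X ^ (q - 1) - algebraMap F K c) ^ (q + 1)))
    (g : F → F → F)
    (hg : g = fun u v =>
      ((1 - c) ^ 2 * u ^ 2 - (1 + c) ^ 2 * v ^ 2 * a) / (u ^ 2 - v ^ 2 * a)) :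
    Function.Bijective f ∧
    Set.ncard {O : Set K | ∃ α : K, O = Set.range (fun m : ℕ => f^[m] α)}
      = 1 + (q - 1) / orderOf (g 1 0) + ∑ l : F, (q - 1) / orderOf (g l 1) := by
  classical
  have hA : Function.Injective (algebraMap F K) := (algebraMap F K).injective
  -- numerators are nonzero
  have hnum : ∀ u v : F, (u ≠ 0 ∨ v ≠ 0) →
      (1 - c) ^ 2 * u ^ 2 - (1 + c) ^ 2 * v ^ 2 * a ≠ 0 := by
    intro u v huv
    have h1c : (1 : F) - c ≠ 0 := sub_ne_zero.mpr (fun h => hc1 h.symm)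
    have h1c' : (1 : F) + c ≠ 0 := by
      intro h
      exact hcm1 (by linear_combination h)
    have := denne a hna ((1 - c) * u) ((1 + c) * v) ?_
    · intro h; apply this; linear_combination h
    · rcases huv with hu | hv
      · exact Or.inl (mul_ne_zero h1c hu)
      · exact Or.inr (mul_ne_zero h1c' hv)
  have hδ0 : ∀ i : Option F, delta g i ≠ 0 := by
    intro i
    cases i with
    | none =>
      show g 1 0 ≠ 0
      rw [hg]
      exact div_ne_zero (hnum 1 0 (Or.inl one_ne_zero)) (denne a hna 1 0 (Or.inl one_ne_zero))
    | some l =>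
      show g l 1 ≠ 0
      rw [hg]
      exact div_ne_zero (hnum l 1 (Or.inr one_ne_zero)) (denne a hna l 1 (Or.inr one_ne_zero))
  set δu : Option F → Fˣ := fun i => Units.mk0 (delta g i) (hδ0 i) with hδu
  -- value of the multiplier on line representatives
  have hDrep : ∀ i : Option F, Dm q c (LRep β i) = algebraMap F K (delta g i) := by
    intro i
    cases i with
    | none =>
      have h1 : (LRep β (none : Option F)) = algebraMap F K 1 + algebraMap F K 0 * β := by
        simp [LRep]
      rw [h1, Dval q hF hodd c a ha hna β hβ 1 0 (Or.inl one_ne_zero)]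
      show _ = algebraMap F K (g 1 0)
      rw [hg]
    | some l =>
      have h1 : (LRep β (some l)) = algebraMap F K l + algebraMap F K 1 * β := by
        simp [LRep]
      rw [h1, Dval q hF hodd c a ha hna β hβ l 1 (Or.inr one_ne_zero)]
      show _ = algebraMap F K (g l 1)
      rw [hg]
  have hrepne : ∀ i : Option F, LRep β i ≠ 0 := by
    intro i
    cases i with
    | none => exact one_ne_zero
    | some l =>
      intro h
      have h' : algebraMap F K l + algebraMap F K 1 * β = 0 := by
        simpa [LRep] using h
      exact one_ne_zero (coordzero a hna β hβ l 1 h').2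
  have hPsine : ∀ (t : Fˣ) i, Psi β t i ≠ 0 := by
    intro t i
    exact mul_ne_zero ((map_ne_zero _).mpr t.ne_zero) (hrepne i)
  have ht1 : ∀ t : F, t ≠ 0 → (algebraMap F K t) ^ (q - 1) = 1 := by
    intro t ht
    rw [← map_pow, ← hF, FiniteField.pow_card_sub_one_eq_one t ht, map_one]
  have hDscale : ∀ t : F, t ≠ 0 → ∀ x : K, Dm q c (algebraMap F K t * x) = Dm q c x := by
    intro t ht x
    rw [Dm, Dm, mul_pow, ht1 t ht, one_mul]
  have hDpsi : ∀ (t : Fˣ) i, Dm q c (Psi β t i) = algebraMap F K (delta g i) := by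
    intro t i
    rw [Psi, hDscale (t : F) t.ne_zero, hDrep i]
  have hfD : ∀ x : K, f x = x * Dm q c x := by
    intro x; rw [hf]; rfl
  have hfPsi : ∀ (t : Fˣ) i, f (Psi β t i) = Psi β (t * δu i) i := by
    intro t i
    rw [hfD, hDpsi, Psi, Psi, Units.val_mul]
    have : ((δu i : Fˣ) : F) = delta g i := rfl
    rw [this, map_mul]
    ring
  have hf0 : f 0 = 0 := by rw [hfD, zero_mul]
  have hiter : ∀ (t : Fˣ) i (m : ℕ), f^[m] (Psi β t i) = Psi β (t * δu i ^ m) i := by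
    intro t i m
    induction m with
    | zero => simp
    | succ m ih =>
      rw [Function.iterate_succ_apply', ih, hfPsi, mul_assoc, ← pow_succ]
  have hPsiInj : ∀ (t : Fˣ) i (s : Fˣ) j, Psi β t i = Psi β s j → t = s ∧ i = j := by
    intro t i s j h
    have hcoord : ∀ i' (t' : Fˣ), Psi β t' i'
        = algebraMap F K (i'.elim (t' : F) fun l => (t' : F) * l)
          + algebraMap F K (i'.elim 0 fun _ => (t' : F)) * β := by
      intro i' t'
      cases i' with
      | none => simp [Psi, LRep]
      | some l =>
        simp only [Psi, LRep, Option.elim_some, map_mul]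
        ring
    rw [hcoord i t, hcoord j s] at h
    obtain ⟨h1, h2⟩ := coordeq a hna β hβ _ _ _ _ h
    cases i with
    | none =>
      cases j with
      | none =>
        refine ⟨Units.ext ?_, rfl⟩
        simpa using h1
      | some l =>
        exfalso
        exact s.ne_zero (by simpa using h2.symm)
    | some l =>
      cases j with
      | none =>
        exfalso
        exact t.ne_zero (by simpa using h2)
      | some l' =>
        simp only [Option.elim_some] at h1 h2
        have hts : t = s := Units.ext h2
        have : l = l' := by
          have := h1
          rw [h2] at this
          exact mul_left_cancel₀ s.ne_zero this
        exact ⟨hts, by rw [this]⟩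
  have hsurj : ∀ x : K, x ≠ 0 → ∃ (t : Fˣ) (i : Option F), x = Psi β t i := by
    intro x hx
    obtain ⟨u, v, huv⟩ := coordspan q hF hK a hna β hβ x
    by_cases hv : v = 0
    · have hu : u ≠ 0 := by
        intro h; apply hx; rw [huv, h, hv]; simp
      exact ⟨Units.mk0 u hu, none, by simp [Psi, LRep, huv, hv]⟩
    · refine ⟨Units.mk0 v hv, some (u / v), ?_⟩
      simp only [Psi, LRep, Units.val_mk0, huv]
      rw [mul_add, ← map_mul, mul_div_cancel₀ _ hv]
  -- f is bijective
  have hbij : Function.Bijective f := by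
    rw [← Finite.injective_iff_bijective]
    intro x y hxy
    by_cases hx : x = 0
    · by_cases hy : y = 0
      · rw [hx, hy]
      · exfalso
        obtain ⟨s, j, rfl⟩ := hsurj y hy
        rw [hx, hf0, hfPsi] at hxy
        exact hPsine _ _ hxy.symm
    · by_cases hy : y = 0
      · exfalso
        obtain ⟨t, i, rfl⟩ := hsurj x hx
        rw [hy, hf0, hfPsi] at hxy
        exact hPsine _ _ hxy
      · obtain ⟨t, i, rfl⟩ := hsurj x hx
        obtain ⟨s, j, rfl⟩ := hsurj y hy
        rw [hfPsi, hfPsi] at hxy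
        obtain ⟨h1, h2⟩ := hPsiInj _ _ _ _ hxy
        subst h2
        have : t = s := mul_right_cancel h1
        rw [this]
  refine ⟨hbij, ?_⟩
  -- orbit of 0
  have horb0 : Set.range (fun m : ℕ => f^[m] (0 : K)) = {0} := by
    have hfix : ∀ m : ℕ, f^[m] (0 : K) = 0 := fun m => Function.iterate_fixed hf0 m
    ext y
    simp only [Set.mem_range, Set.mem_singleton_iff]
    constructor
    · rintro ⟨m, rfl⟩; exact hfix m
    · rintro rfl; exact ⟨0, hfix 0⟩
  -- orbit equality from relation
  have horbeq : ∀ (t s : Fˣ) i, (∃ m : ℕ, s = t * δu i ^ m) →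
      Set.range (fun m : ℕ => f^[m] (Psi β t i))
        = Set.range (fun m : ℕ => f^[m] (Psi β s i)) := by
    rintro t s i ⟨m, rfl⟩
    have hopos : 1 ≤ orderOf (δu i) := orderOf_pos (δu i)
    obtain ⟨o', ho'⟩ : ∃ o', orderOf (δu i) = o' + 1 :=
      ⟨orderOf (δu i) - 1, by omega⟩
    ext y
    simp only [Set.mem_range, hiter]
    constructor
    · rintro ⟨k, rfl⟩
      refine ⟨k + m * o', ?_⟩
      have hu : t * δu i ^ m * δu i ^ (k + m * o') = t * δu i ^ k := by
        rw [mul_assoc, ← pow_add]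
        congr 1
        have hexp : m + (k + m * o') = k + orderOf (δu i) * m := by
          rw [ho']; ring
        rw [hexp, pow_add, pow_mul, pow_orderOf_eq_one, one_pow, mul_one]
      rw [hu]
    · rintro ⟨k, rfl⟩
      exact ⟨m + k, by rw [pow_add, ← mul_assoc]⟩
  -- orbit equality gives relation
  have hmemorb : ∀ (t : Fˣ) i (s : Fˣ) j,
      Set.range (fun m : ℕ => f^[m] (Psi β t i))
        = Set.range (fun m : ℕ => f^[m] (Psi β s j)) →
      i = j ∧ ∃ m : ℕ, s = t * δu i ^ m := by
    intro t i s j h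
    have hmem : Psi β s j ∈ Set.range (fun m : ℕ => f^[m] (Psi β t i)) := by
      rw [h]; exact ⟨0, rfl⟩
    obtain ⟨m, hm⟩ := hmem
    simp only [hiter] at hm
    obtain ⟨h1, h2⟩ := hPsiInj _ _ _ _ hm
    exact ⟨h2, m, h1.symm⟩
  -- injectivity of the parametrization
  have hWinj : Function.Injective (Wmap β f δu) := by
    intro x y h
    match x, y with
    | none, none => rfl
    | none, some ⟨i, cQ⟩ =>
      exfalso
      have : Psi β (Quotient.out cQ) i ∈ (Wmap β f δu (some ⟨i, cQ⟩)) := ⟨0, rfl⟩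
      rw [← h] at this
      exact hPsine _ _ this
    | some ⟨i, cQ⟩, none =>
      exfalso
      have : Psi β (Quotient.out cQ) i ∈ (Wmap β f δu (some ⟨i, cQ⟩)) := ⟨0, rfl⟩
      rw [h] at this
      exact hPsine _ _ this
    | some ⟨i, cQ⟩, some ⟨j, cQ'⟩ =>
      obtain ⟨hij, m, hm⟩ := hmemorb _ _ _ _ h
      subst hij
      have hq : cQ = cQ' := by
        rw [← QuotientGroup.out_eq' cQ, ← QuotientGroup.out_eq' cQ', QuotientGroup.eq]
        rw [hm]
        rw [inv_mul_cancel_left]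
        exact Subgroup.pow_mem _ (Subgroup.mem_zpowers _) m
      rw [hq]
  -- range of the parametrization
  have hWrange : Set.range (Wmap β f δu)
      = {O : Set K | ∃ α : K, O = Set.range (fun m : ℕ => f^[m] α)} := by
    ext O
    constructor
    · rintro ⟨x, rfl⟩
      match x with
      | none => exact ⟨0, horb0.symm⟩
      | some ⟨i, cQ⟩ => exact ⟨Psi β (Quotient.out cQ) i, rfl⟩
    · rintro ⟨α, rfl⟩
      by_cases hα : α = 0
      · subst hα
        exact ⟨none, horb0.symm⟩
      · obtain ⟨t, i, rfl⟩ := hsurj α hα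
        refine ⟨some ⟨i, QuotientGroup.mk t⟩, ?_⟩
        show Set.range (fun m : ℕ => f^[m] (Psi β (Quotient.out (QuotientGroup.mk t)) i)) = _
        apply horbeq
        have hrel : (Quotient.out (QuotientGroup.mk t : Fˣ ⧸ zpowers (δu i)))⁻¹ * t
            ∈ zpowers (δu i) := by
          exact QuotientGroup.eq.mp (QuotientGroup.out_eq' (QuotientGroup.mk t))
        rw [← mem_powers_iff_mem_zpowers] at hrel
        obtain ⟨m, hm⟩ := (Submonoid.mem_powers_iff _ _).mp hrel
        exact ⟨m, by rw [hm, mul_inv_cancel_left]⟩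
  -- the cardinality computation
  letI : ∀ i : Option F, Fintype (Fˣ ⧸ zpowers (δu i)) := fun i => Fintype.ofFinite _
  have hcardQ : ∀ i : Option F,
      Fintype.card (Fˣ ⧸ zpowers (δu i)) = (q - 1) / orderOf (delta g i) := by
    intro i
    have h1 : Nat.card Fˣ = Nat.card (Fˣ ⧸ zpowers (δu i)) * Nat.card (zpowers (δu i)) :=
      card_eq_card_quotient_mul_card_subgroup _
    rw [Nat.card_zpowers] at h1
    have h2 : Nat.card Fˣ = q - 1 := by
      rw [Nat.card_eq_fintype_card, Fintype.card_units, hF]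
    have h3 : orderOf (delta g i) = orderOf (δu i) := by
      rw [← orderOf_units]
      rfl
    rw [h2] at h1
    rw [h3, ← Nat.card_eq_fintype_card]
    exact (Nat.div_eq_of_eq_mul_left (orderOf_pos (δu i)) (by linarith [h1])).symm
  rw [← hWrange, ← Nat.card_coe_set_eq, Nat.card_range_of_injective hWinj]
  rw [Finite.card_option, Nat.card_eq_fintype_card, Fintype.card_sigma]
  have hsum : ∑ i : Option F, Fintype.card (Fˣ ⧸ zpowers (δu i))
      = (q - 1) / orderOf (g 1 0) + ∑ l : F, (q - 1) / orderOf (g l 1) := by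
    rw [Fintype.sum_option]
    congr 1
    · exact hcardQ none
    · exact Finset.sum_congr rfl fun l _ => hcardQ (some l)
  rw [hsum]
  ring
end

section
/- Let q be a power of 2, a ∈ F_q with Tr(a) = 1, c ∈ F_q^*, and Tr(1/c) = 1. Then X² + X + (a + 1/c) splits over F_q with two distinct roots λ₁, λ₂ satisfying λ₁ + λ₂ = 1, and the fixed points of f(X) = X(X^{q-1} - c)^{q+1} in F_{q²} are exactly 0 together with the elements y(λᵢ + β) for y ∈ F_q^* and i ∈ {1,2}, where β² + β + a = 0. -/
open Finset in
lemma tr_frob {F : Type*} [Field F] [Fintype F] [CharP F 2] (x : F) :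
    (letI := ZMod.algebra F 2; Algebra.trace (ZMod 2) F (x * x) = Algebra.trace (ZMod 2) F x) := by
  letI := ZMod.algebra F 2
  have hr : ∀ r : ZMod 2, r ^ 2 = r := by decide
  let e : F ≃ₐ[ZMod 2] F :=
    { frobeniusEquiv F 2 with
      commutes' := fun r => by
        show frobenius F 2 (algebraMap (ZMod 2) F r) = algebraMap (ZMod 2) F r
        rw [frobenius_def, ← map_pow, hr] }
  have h1 := trace_eq_sum_automorphisms (K := ZMod 2) (x * x)
  have h2 := trace_eq_sum_automorphisms (K := ZMod 2) (x : F)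
  have hex : x * x = e x := by
    show x * x = frobenius F 2 x
    rw [frobenius_def]; ring
  have hsum : ∑ σ : F ≃ₐ[ZMod 2] F, σ (e x) = ∑ σ : F ≃ₐ[ZMod 2] F, σ x :=
    Fintype.sum_bijective (· * e) (Group.mulRight_bijective e)
      (fun σ => (σ * e) x) (fun τ => τ x) (fun σ => rfl)
  apply (algebraMap (ZMod 2) F).injective
  rw [h1, h2, hex, hsum]

lemma AS_surj {F : Type*} [Field F] [Fintype F] [CharP F 2]
    (T : F →+ ZMod 2) (hT2 : ∀ x : F, T (x * x) = T x)
    (a : F) (ha : T a = 1) (b : F) (hb : T b = 0) :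
    ∃ x : F, x * x + x = b := by
  have two : (2 : F) = 0 := CharP.cast_eq_zero F 2
  let φ : F →+ F :=
    { toFun := fun x => x * x + x
      map_zero' := by simp
      map_add' := fun x y => by linear_combination x * y * two }
  have hker : (φ.ker : Set F) = {0, 1} := by
    ext x
    simp only [SetLike.mem_coe, AddMonoidHom.mem_ker, Set.mem_insert_iff, Set.mem_singleton_iff]
    constructor
    · intro h
      have h' : x * x + x = 0 := h
      have : x * (x + 1) = 0 := by linear_combination h'
      rcases mul_eq_zero.mp this with h'' | h''
      · exact Or.inl h''
      · exact Or.inr (by linear_combination h'' - two)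
    · rintro (rfl | rfl) <;> simp [φ] <;> linear_combination two
  have hkercard : Nat.card φ.ker = 2 := by
    rw [← SetLike.coe_sort_coe, hker, Nat.card_coe_set_eq, Set.ncard_pair (zero_ne_one (α := F))]
  have hrangesub : (φ.range : Set F) ⊆ (T.ker : Set F) := by
    rintro _ ⟨x, rfl⟩
    simp only [SetLike.mem_coe, AddMonoidHom.mem_ker]
    show T (x * x + x) = 0
    rw [map_add, hT2]
    exact CharTwo.add_self_eq_zero _
  have hTkercard : Nat.card F = Nat.card T.ker * 2 := by
    have h1 := AddSubgroup.card_eq_card_quotient_mul_card_addSubgroup T.ker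
    have h2 : Nat.card (F ⧸ T.ker) = 2 := by
      have e := QuotientAddGroup.quotientKerEquivRange T
      have : T.range = ⊤ := by
        rw [AddSubgroup.eq_top_iff']
        intro x
        have : x = 0 ∨ x = 1 := by revert x; decide
        rcases this with rfl | rfl
        · exact zero_mem _
        · exact ⟨a, ha⟩
      rw [Nat.card_congr e.toEquiv, this]
      simpa using (Nat.card_congr (AddSubgroup.topEquiv (G := ZMod 2)).toEquiv)
    rw [h1, h2, mul_comm]
  have hφcard : Nat.card F = Nat.card φ.range * 2 := by
    have h1 := AddSubgroup.card_eq_card_quotient_mul_card_addSubgroup φ.ker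
    rw [h1, hkercard, Nat.card_congr (QuotientAddGroup.quotientKerEquivRange φ).toEquiv]
  have hcards : Nat.card T.ker ≤ Nat.card φ.range := by omega
  have hsets : (φ.range : Set F) = (T.ker : Set F) :=
    Set.eq_of_subset_of_ncard_le hrangesub
      (by rw [← Nat.card_coe_set_eq, ← Nat.card_coe_set_eq]; exact hcards)
      ((T.ker : Set F).toFinite)
  have hbmem : b ∈ (φ.range : Set F) := by
    rw [hsets]; exact hb
  obtain ⟨x, hx⟩ := hbmem
  exact ⟨x, hx⟩

open Polynomial in
lemma fixed_field_mem {F K : Type*} [Field F] [Field K] [Fintype F] [Fintype K] [Algebra F K]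
    {q : ℕ} (hq2 : 2 ≤ q) (hF : Fintype.card F = q) (x : K) (hx : x ^ q = x) :
    ∃ y : F, algebraMap F K y = x := by
  classical
  set P : K[X] := X ^ q - X with hP
  have hdeg : P.natDegree = q := by
    have hlt : (X : K[X]).natDegree < (X ^ q : K[X]).natDegree := by
      rw [natDegree_X, natDegree_X_pow]; omega
    rw [hP, natDegree_sub_eq_left_of_natDegree_lt hlt, natDegree_X_pow]
  have hP0 : P ≠ 0 := fun h => by rw [h, natDegree_zero] at hdeg; omega
  have hroots : ∀ z : K, z ^ q = z → z ∈ P.roots.toFinset := by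
    intro z hz
    rw [Multiset.mem_toFinset, mem_roots hP0]
    simp [hP, IsRoot, hz]
  have hS : {z : K | z ^ q = z} ⊆ (P.roots.toFinset : Set K) := fun z hz => hroots z hz
  have hScard : ({z : K | z ^ q = z}).ncard ≤ q := by
    refine le_trans (Set.ncard_le_ncard hS (P.roots.toFinset : Set K).toFinite) ?_
    rw [Set.ncard_coe_finset]
    exact le_trans (Multiset.toFinset_card_le _) (le_trans (P.card_roots' ) (le_of_eq hdeg))
  have hrsub : Set.range (algebraMap F K) ⊆ {z : K | z ^ q = z} := by
    rintro _ ⟨y, rfl⟩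
    show (algebraMap F K y) ^ q = algebraMap F K y
    rw [← map_pow, ← hF, FiniteField.pow_card]
  have hrcard : (Set.range (algebraMap F K)).ncard = q := by
    rw [← Nat.card_coe_set_eq, Nat.card_range_of_injective (algebraMap F K).injective,
      Nat.card_eq_fintype_card, hF]
  have heq : Set.range (algebraMap F K) = {z : K | z ^ q = z} :=
    Set.eq_of_subset_of_ncard_le hrsub (by omega) (Set.Finite.subset (P.roots.toFinset : Set K).toFinite hS)
  have : x ∈ Set.range (algebraMap F K) := by rw [heq]; exact hx
  exact this

/-- for `q` even, `Tr(a) = 1`, `Tr(1/c) = 1`, the polynomial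
`X² + X + (a + 1/c)` has two distinct roots `λ₁, λ₂ ∈ F_q` with `λ₁ + λ₂ = 1`, and the
fixed points of `f` are exactly `0` together with `y(λᵢ + β)`, `y ∈ F_q^*`, `i ∈ {1,2}`. -/
theorem stmt_18 (q n : ℕ) (hn : n ≠ 0) (hq : q = 2 ^ n)
    (F K : Type*) [Field F] [Field K] [Fintype F] [Fintype K] [CharP F 2]
    [Algebra F K] (hF : Fintype.card F = q) (hK : Fintype.card K = q ^ 2)
    (Tr : F → ZMod 2)
    (hTr : Tr = (letI := ZMod.algebra F 2; (Algebra.trace (ZMod 2) F : F →ₗ[ZMod 2] ZMod 2)))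
    (a : F) (ha : Tr a = 1)
    (β : K) (hβ : β ^ 2 + β + algebraMap F K a = 0)
    (c : F) (hc : c ≠ 0) (htc : Tr (1 / c) = 1) :
    ∃ l₁ l₂ : F, l₁ ≠ l₂ ∧ l₁ + l₂ = 1 ∧
      l₁ ^ 2 + l₁ + (a + 1 / c) = 0 ∧ l₂ ^ 2 + l₂ + (a + 1 / c) = 0 ∧
      {α : K | α * ((α ^ (q - 1) - algebraMap F K c) ^ (q + 1)) = α}
        = {0} ∪ {α : K | ∃ y : F, y ≠ 0 ∧
            (α = algebraMap F K y * (algebraMap F K l₁ + β) ∨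
             α = algebraMap F K y * (algebraMap F K l₂ + β))} := by
  subst hTr
  subst hq
  set q := 2 ^ n with hq
  haveI : CharP K 2 := charP_of_injective_algebraMap (algebraMap F K).injective 2
  have twoF : (2 : F) = 0 := CharP.cast_eq_zero F 2
  have two : (2 : K) = 0 := CharP.cast_eq_zero K 2
  have hq1 : 1 ≤ q := Nat.one_le_two_pow
  have hq2 : 2 ≤ q := by
    calc 2 = 2 ^ 1 := (pow_one 2).symm
    _ ≤ 2 ^ n := Nat.pow_le_pow_right (by norm_num) (by omega)
  set Tr : F → ZMod 2 :=
    (letI := ZMod.algebra F 2; ((Algebra.trace (ZMod 2) F : F →ₗ[ZMod 2] ZMod 2) : F → ZMod 2))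
    with hTr
  have hTadd : ∀ u v : F, Tr (u + v) = Tr u + Tr v := by
    intro u v
    letI := ZMod.algebra F 2
    exact map_add (Algebra.trace (ZMod 2) F) u v
  have hTsq : ∀ x : F, Tr (x * x) = Tr x := fun x => tr_frob x
  have hTrb : Tr (a + 1 / c) = 0 := by rw [hTadd, ha, htc]; decide
  obtain ⟨l₁, hl₁⟩ : ∃ x : F, x * x + x = a + 1 / c := by
    letI := ZMod.algebra F 2
    exact AS_surj (Algebra.trace (ZMod 2) F).toAddMonoidHom
      (fun x => hTsq x) a ha (a + 1 / c) hTrb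
  set l₂ := l₁ + 1 with hl₂
  have hne : l₁ ≠ l₂ := fun h => one_ne_zero (left_eq_add.mp h)
  have hsum12 : l₁ + l₂ = 1 := by rw [hl₂]; linear_combination l₁ * twoF
  have hr1 : l₁ ^ 2 + l₁ + (a + 1 / c) = 0 := by
    linear_combination hl₁ + (a + 1 / c) * twoF
  have hr2 : l₂ ^ 2 + l₂ + (a + 1 / c) = 0 := by
    rw [hl₂]; linear_combination hl₁ + (l₁ + 1 + a + 1 / c) * twoF
  have hroots : ∀ l : F, l ^ 2 + l + (a + 1 / c) = 0 → l = l₁ ∨ l = l₂ := by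
    intro l hl
    have h0 : (l - l₁) * (l - l₂) = 0 := by
      rw [hl₂]
      linear_combination hl - hr1 + (l₁ ^ 2 + l₁ - l * l₁ - l) * twoF
    rcases mul_eq_zero.mp h0 with h | h
    · exact Or.inl (sub_eq_zero.mp h)
    · exact Or.inr (sub_eq_zero.mp h)
  have hβF : ∀ b : F, algebraMap F K b ≠ β := by
    intro b hb
    have h0 : algebraMap F K (b * b + b + a) = 0 := by
      rw [map_add, map_add, map_mul, hb]
      linear_combination hβ
    have hba : b * b + b + a = 0 := (map_eq_zero _).mp h0
    have haa : a = b * b + b := by linear_combination -hba + a * twoF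
    have : Tr a = 0 := by
      rw [haa, hTadd, hTsq]
      exact CharTwo.add_self_eq_zero _
    rw [ha] at this
    exact one_ne_zero this
  -- frobenius facts
  have hfq : ∀ u v : K, (u + v) ^ q = u ^ q + v ^ q := fun u v => add_pow_char_pow u v 2 n
  have hFfixK : ∀ z : F, (algebraMap F K z) ^ q = algebraMap F K z := fun z => by
    rw [← map_pow, ← hF, FiniteField.pow_card]
  have hcardK : ∀ z : K, z ^ q ^ 2 = z := fun z => by rw [← hK]; exact FiniteField.pow_card z
  have hβq : β ^ q = β + 1 := by
    have h0 : (β ^ 2 + β + algebraMap F K a) ^ q = 0 := by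
      rw [hβ]; exact zero_pow (by omega)
    rw [hfq, hfq, hFfixK] at h0
    have hswap : (β ^ 2) ^ q = (β ^ q) ^ 2 := by rw [← pow_mul, mul_comm, pow_mul]
    rw [hswap] at h0
    have hprod : (β ^ q + β) * (β ^ q + β + 1) = 0 := by
      linear_combination h0 + hβ + (β ^ q * β - algebraMap F K a) * two
    rcases mul_eq_zero.mp hprod with h | h
    · exfalso
      have hfix : β ^ q = β := by linear_combination h - β * two
      obtain ⟨b, hb⟩ := fixed_field_mem hq2 hF β hfix
      exact hβF b hb
    · linear_combination h - (β + 1) * two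
  have hdecomp : ∀ α : K, ∃ x y : F, α = algebraMap F K x + algebraMap F K y * β := by
    intro α
    have h1 : (α ^ q + α) ^ q = α ^ q + α := by
      rw [hfq, ← pow_mul, ← pow_two, hcardK]; ring
    obtain ⟨y, hy⟩ := fixed_field_mem hq2 hF _ h1
    have hαq : α ^ q = α + algebraMap F K y := by
      rw [hy]; linear_combination (-α) * two
    have h2 : (α + algebraMap F K y * β) ^ q = α + algebraMap F K y * β := by
      rw [hfq, mul_pow, hFfixK, hβq, hαq]
      linear_combination (algebraMap F K y) * two
    obtain ⟨x, hx⟩ := fixed_field_mem hq2 hF _ h2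
    exact ⟨x, y, by rw [hx]; linear_combination (-(algebraMap F K y * β)) * two⟩
  set C := algebraMap F K c with hC
  have hC0 : C ≠ 0 := by simpa [hC] using hc
  have hkey : ∀ α : K, α ≠ 0 → ∀ x y : F,
      α = algebraMap F K x + algebraMap F K y * β →
      (α * ((α ^ (q - 1) - C) ^ (q + 1)) = α ↔
        c * x ^ 2 + c * x * y + c * a * y ^ 2 + y ^ 2 = 0) := by
    intro α hα x y hαd
    have hαq : α ^ q = α + algebraMap F K y := by
      rw [hαd, hfq, mul_pow, hFfixK, hFfixK, hβq]; ring
    have hq1' : α ^ (q - 1) * α = α ^ q := by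
      rw [← pow_succ, Nat.sub_add_cancel hq1]
    have hu1 : (α ^ (q - 1)) ^ q * α ^ (q - 1) = 1 := by
      rw [← pow_mul, ← pow_add]
      have hee : (q - 1) * q + (q - 1) = q ^ 2 - 1 := by
        obtain ⟨m, hm⟩ := Nat.exists_eq_add_of_le hq2
        have e1 : q - 1 = 1 + m := by omega
        rw [e1, hm]
        exact Nat.eq_sub_of_add_eq (by ring)
      rw [hee]
      have := FiniteField.pow_card_sub_one_eq_one α hα
      rwa [hK] at this
    have hCq : C ^ q = C := hFfixK c
    have hexp : (α ^ (q - 1) - C) ^ (q + 1) =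
        1 + (C * (α ^ (q - 1)) ^ q + C * α ^ (q - 1) + C * C) := by
      have hsub : α ^ (q - 1) - C = α ^ (q - 1) + C := CharTwo.sub_eq_add _ _
      rw [hsub, pow_succ, hfq, hCq]
      linear_combination hu1
    rw [hexp]
    have step1 : α * (1 + (C * (α ^ (q - 1)) ^ q + C * α ^ (q - 1) + C * C)) = α ↔
        (C * (α ^ (q - 1)) ^ q + C * α ^ (q - 1) + C * C) * (α ^ q * α) = 0 := by
      constructor
      · intro h
        have hD : α * (C * (α ^ (q - 1)) ^ q + C * α ^ (q - 1) + C * C) = 0 := by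
          linear_combination h
        rcases mul_eq_zero.mp hD with h' | h'
        · exact absurd h' hα
        · rw [h', zero_mul]
      · intro h
        have hαα : α ^ q * α ≠ 0 := mul_ne_zero (pow_ne_zero _ hα) hα
        rcases mul_eq_zero.mp h with h' | h'
        · rw [h']; ring
        · exact absurd h' hαα
    rw [step1]
    have huq : (α ^ (q - 1)) ^ q * (α ^ q * α) = α * α := by
      calc (α ^ (q - 1)) ^ q * (α ^ q * α) = (α ^ (q - 1) * α) ^ q * α := by
            rw [mul_pow]; ring
      _ = α ^ (q * q) * α := by rw [hq1', ← pow_mul]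
      _ = α * α := by rw [← pow_two, hcardK]
    have hu : α ^ (q - 1) * (α ^ q * α) = α ^ q * α ^ q := by
      calc α ^ (q - 1) * (α ^ q * α) = α ^ (q - 1) * α * α ^ q := by ring
      _ = α ^ q * α ^ q := by rw [hq1']
    have hexpand : (C * (α ^ (q - 1)) ^ q + C * α ^ (q - 1) + C * C) * (α ^ q * α)
        = C * algebraMap F K (c * x ^ 2 + c * x * y + c * a * y ^ 2 + y ^ 2) := by
      have h1 : (C * (α ^ (q - 1)) ^ q + C * α ^ (q - 1) + C * C) * (α ^ q * α)
          = C * (α * α) + C * (α ^ q * α ^ q) + C * C * (α ^ q * α) := by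
        linear_combination C * huq + C * hu
      have hRHS : algebraMap F K (c * x ^ 2 + c * x * y + c * a * y ^ 2 + y ^ 2)
          = C * (algebraMap F K x) ^ 2 + C * algebraMap F K x * algebraMap F K y
            + C * algebraMap F K a * (algebraMap F K y) ^ 2 + (algebraMap F K y) ^ 2 := by
        simp [hC, map_add, map_mul, map_pow]
      rw [h1, hαq, hαd, hRHS]
      linear_combination (C * C * (algebraMap F K y) ^ 2) * hβ +
        (C * ((algebraMap F K x) ^ 2 + 2 * algebraMap F K x * algebraMap F K y * β
          + (algebraMap F K y) ^ 2 * β ^ 2 + algebraMap F K x * algebraMap F K y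
          + (algebraMap F K y) ^ 2 * β - C * algebraMap F K a * (algebraMap F K y) ^ 2)) * two +
        (C * C * algebraMap F K x * algebraMap F K y * β) * two
    rw [hexpand, mul_eq_zero]
    simp only [map_eq_zero]
    exact or_iff_right hC0
  refine ⟨l₁, l₂, hne, hsum12, hr1, hr2, ?_⟩
  have hc1 : c * (1 / c) = 1 := by field_simp
  ext α
  simp only [Set.mem_setOf_eq, Set.mem_union, Set.mem_singleton_iff]
  constructor
  · intro hfix
    by_cases hα : α = 0
    · exact Or.inl hα
    right
    obtain ⟨x, y, hαd⟩ := hdecomp α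
    have heq := (hkey α hα x y hαd).mp hfix
    have hy : y ≠ 0 := by
      rintro rfl
      have hx2 : c * x ^ 2 = 0 := by linear_combination heq
      have hx0 : x = 0 := by
        rcases mul_eq_zero.mp hx2 with h | h
        · exact absurd h hc
        · exact pow_eq_zero_iff (two_ne_zero) |>.mp h
      apply hα
      rw [hαd, hx0]; simp
    have hxl : x = x / y * y := (div_mul_cancel₀ x hy).symm
    set l := x / y with hldef
    have hroot : l ^ 2 + l + (a + 1 / c) = 0 := by
      rw [hxl] at heq
      have h2 : c * y ^ 2 * (l ^ 2 + l + (a + 1 / c)) = 0 := by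
        linear_combination heq + y ^ 2 * hc1
      rcases mul_eq_zero.mp h2 with h | h
      · exact absurd h (mul_ne_zero hc (pow_ne_zero 2 hy))
      · exact h
    have hαform : α = algebraMap F K y * (algebraMap F K l + β) := by
      rw [hαd, hxl, map_mul]; ring
    rcases hroots l hroot with h | h
    · exact ⟨y, hy, Or.inl (by rw [hαform, h])⟩
    · exact ⟨y, hy, Or.inr (by rw [hαform, h])⟩
  · rintro (rfl | ⟨y, hy, hor⟩)
    · simp
    have hback : ∀ l : F, l ^ 2 + l + (a + 1 / c) = 0 →
        (algebraMap F K y * (algebraMap F K l + β)) *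
          (((algebraMap F K y * (algebraMap F K l + β)) ^ (q - 1) - C) ^ (q + 1))
          = algebraMap F K y * (algebraMap F K l + β) := by
      intro l hlr
      have hαd : algebraMap F K y * (algebraMap F K l + β)
          = algebraMap F K (l * y) + algebraMap F K y * β := by
        rw [map_mul]; ring
      have hα0 : algebraMap F K y * (algebraMap F K l + β) ≠ 0 := by
        apply mul_ne_zero (by simpa using hy)
        intro h
        apply hβF l
        linear_combination -h + (algebraMap F K l) * two
      refine (hkey _ hα0 (l * y) y hαd).mpr ?_
      linear_combination (c * y ^ 2) * hlr - y ^ 2 * hc1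
    rcases hor with h | h
    · rw [h]; exact hback l₁ hr1
    · rw [h]; exact hback l₂ hr2
end

section
/- Let q be an odd prime power, c ∈ F_q^*, a ∈ F_q^* a non-square, β² = a, and let f_c(X) = X(X^{q-1} - c)^{q+1} on F_{q²}. Then the map φ : F_{q²} → F_{q²} given by φ(x + yβ) = y + x·β', where β' = β/a satisfies (β')² = 1/a, intertwines f_c and f_{-c}, i.e., the functional graphs of f_c and f_{-c} on F_{q²} are isomorphic as directed graphs. -/
/-- the functional graphs of `f_c` and `f_{-c}` on `F_{q²}` are isomorphic
as directed graphs, via the bijection `φ(x + yβ) = y + x·β'` where `β' = β/a` satisfies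
`β'² = 1/a`. -/
theorem stmt_19 (q : ℕ) (F K : Type*) [Field F] [Field K] [Fintype F] [Fintype K]
    [Algebra F K] (hF : Fintype.card F = q) (hK : Fintype.card K = q ^ 2)
    (hodd : Odd q)
    (c a : F) (hc : c ≠ 0) (ha : a ≠ 0) (hna : ¬ IsSquare a)
    (β : K) (hβ : β ^ 2 = algebraMap F K a) :
    ∃ e : K ≃ K,
      (∀ x y : F, e (algebraMap F K x + algebraMap F K y * β)
          = algebraMap F K y + algebraMap F K x * (β * (algebraMap F K a)⁻¹)) ∧
      (∀ α : K, e (α * ((α ^ (q - 1) - algebraMap F K c) ^ (q + 1)))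
          = e α * (((e α) ^ (q - 1) - algebraMap F K (-c)) ^ (q + 1))) := by
  have hchar : ringChar F ≠ 2 := by
    intro h
    have h2 := FiniteField.even_card_iff_char_two.mp h
    rw [hF] at h2
    rcases hodd with ⟨k, rfl⟩
    omega
  have haK : algebraMap F K a ≠ 0 := by
    simpa using (map_ne_zero (algebraMap F K)).mpr ha
  have hβ0 : β ≠ 0 := by
    intro h
    rw [h] at hβ
    simp at hβ
    exact haK hβ.symm
  have hapow : a ^ (q / 2) = -1 := by
    rcases FiniteField.pow_dichotomy hchar ha with h | h
    · exact absurd ((FiniteField.isSquare_iff hchar ha).mpr h) hna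
    · rwa [hF] at h
  have hq1 : q - 1 = 2 * (q / 2) := by
    rcases hodd with ⟨k, rfl⟩; omega
  have hβq : β ^ (q - 1) = -1 := by
    rw [hq1, pow_mul, hβ, ← map_pow, hapow]
    simp
  refine ⟨Equiv.mulRight₀ β⁻¹ (inv_ne_zero hβ0), ?_, ?_⟩
  · intro x y
    simp only [Equiv.mulRight₀_apply]
    have hβinv : β⁻¹ = β * (algebraMap F K a)⁻¹ := by
      field_simp
      rw [← hβ]
    rw [add_mul, mul_assoc, mul_inv_cancel₀ hβ0, mul_one, hβinv]
    ring
  · intro α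
    simp only [Equiv.mulRight₀_apply]
    have h1 : (α * β⁻¹) ^ (q - 1) = -(α ^ (q - 1)) := by
      rw [mul_pow, inv_pow, hβq, inv_neg, inv_one, mul_neg_one]
    rw [h1]
    have heven : Even (q + 1) := by rcases hodd with ⟨k, rfl⟩; exact ⟨k + 1, by ring⟩
    have h2 : (-(α ^ (q - 1)) - algebraMap F K (-c)) ^ (q + 1)
        = (α ^ (q - 1) - algebraMap F K c) ^ (q + 1) := by
      rw [map_neg, sub_neg_eq_add,
        show -α ^ (q - 1) + algebraMap F K c = -(α ^ (q - 1) - algebraMap F K c) by ring,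
        heven.neg_pow]
    rw [h2]; ring
end
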